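/- arXiv:2403.06983 — 8 statements merged into one kernel-verified Lean document; each statement's English description precedes it below -/
import Mathlib

section
/- Let B be a d×d real symmetric positive definite matrix with eigenvalues λ₁ ≥ … ≥ λ_d > 0 and let e_j^{(0)} be a unit eigenvector of B for λ_j (the j-th largest eigenvalue counted with multiplicity). Let v^{(1)},…,v^{(m)} ∈ ℝ^d with ‖v^{(k)}‖_∞ ≤ V for all k, where V ≥ 1/√d. Set A^{(m)} = B + √B (Σ_{k=1}^m v^{(k)} (v^{(k)})ᵀ) √B, and let e_i^{(m)} be a unit eigenvector of A^{(m)} corresponding to its i-th largest eigenvalue (counted with multiplicity), chosen from an orthonormal eigenbasis. Then |⟨e_i^{(m)}, e_j^{(0)}⟩| ≤ C_m · √(min(λ_i,λ_j)/max(λ_i,λ_j)) for all i,j ∈ {1,…,d}, where C₀ = 1 and C_{k+1} = 5 d⁷ V⁴ C_k⁵ √(1 + d k V²). -/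
/-!
With `S = √B`, the quadratic form of `A` is `⟨x, B x⟩ + ∑ₖ ⟨v⁽ᵏ⁾, S x⟩²`, and Cauchy–Schwarz
bounds each `⟨v⁽ᵏ⁾, S x⟩²` by `d V² ⟨x, B x⟩`, so `B ≤ A ≤ (1 + d m V²) B` as quadratic forms.
A dimension count (the span of the top `i + 1` eigenvectors of one matrix meets the span of the
bottom `d - i` eigenvectors of the other) turns this into `λᵢ ≤ νᵢ ≤ (1 + d m V²) λᵢ`. Then
`λⱼ ⟨eᵢ, fⱼ⟩² ≤ ⟨eᵢ, B eᵢ⟩ ≤ νᵢ ≤ (1 + d m V²) λᵢ` and symmetrically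
`λᵢ ⟨eᵢ, fⱼ⟩² ≤ νᵢ ⟨eᵢ, fⱼ⟩² ≤ ⟨fⱼ, A fⱼ⟩ ≤ (1 + d m V²) λⱼ`, which give the bound with
`√(1 + d m V²)` in place of `C m`; the recursion makes `C m` at least that large because
`d V² ≥ 1`.
-/

open Matrix Finset

/-- The square root of a positive semidefinite matrix, as `Matrix.PosSemidef.sqrt` was defined in
Mathlib (December 2024): `U * diagonal (√ ∘ eigenvalues) * U⋆` for the eigenvector unitary `U`. -/
noncomputable def Matrix.PosSemidef.sqrt {n 𝕜 : Type*} [Fintype n] [RCLike 𝕜] [PartialOrder 𝕜]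
    [DecidableEq n] {A : Matrix n n 𝕜} (hA : A.PosSemidef) : Matrix n n 𝕜 :=
  hA.isHermitian.eigenvectorUnitary.1 * diagonal ((↑) ∘ (√·) ∘ hA.isHermitian.eigenvalues) *
    (star hA.isHermitian.eigenvectorUnitary : Matrix n n 𝕜)

section Orthonormal

variable {n ι : Type*} [Fintype n] [Fintype ι] {g : ι → n → ℝ}

lemma mulVec_sum_smul_of_eigen {M : Matrix n n ℝ} {μ : ι → ℝ}
    (hM : ∀ k, M *ᵥ g k = μ k • g k) (c : ι → ℝ) :
    M *ᵥ ∑ l, c l • g l = ∑ l, (μ l * c l) • g l := by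
  simp_rw [mulVec_sum, mulVec_smul, hM, smul_smul, mul_comm]

variable [DecidableEq ι]

lemma dotProduct_sum_smul_of_orthonormal
    (hg : ∀ a b, g a ⬝ᵥ g b = if a = b then (1 : ℝ) else 0) (c : ι → ℝ) (k : ι) :
    g k ⬝ᵥ ∑ l, c l • g l = c k := by
  simp [dotProduct_sum, dotProduct_smul, hg]

lemma linearIndependent_of_orthonormal
    (hg : ∀ a b, g a ⬝ᵥ g b = if a = b then (1 : ℝ) else 0) : LinearIndependent ℝ g := by
  refine Fintype.linearIndependent_iff.mpr fun c hc k => ?_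
  rw [← dotProduct_sum_smul_of_orthonormal hg c k, hc, dotProduct_zero]

lemma sum_smul_dotProduct_sum_smul_of_orthonormal
    (hg : ∀ a b, g a ⬝ᵥ g b = if a = b then (1 : ℝ) else 0) (c c' : ι → ℝ) :
    (∑ l, c l • g l) ⬝ᵥ ∑ l, c' l • g l = ∑ l, c l * c' l := by
  simp_rw [sum_dotProduct, smul_dotProduct, dotProduct_sum_smul_of_orthonormal hg, smul_eq_mul]

lemma sum_smul_dotProduct_mulVec_sum_smul_of_orthonormal {M : Matrix n n ℝ} {μ : ι → ℝ}
    (hg : ∀ a b, g a ⬝ᵥ g b = if a = b then (1 : ℝ) else 0)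
    (hM : ∀ k, M *ᵥ g k = μ k • g k) (c : ι → ℝ) :
    (∑ l, c l • g l) ⬝ᵥ M *ᵥ ∑ l, c l • g l = ∑ l, μ l * c l ^ 2 := by
  rw [mulVec_sum_smul_of_eigen hM, sum_smul_dotProduct_sum_smul_of_orthonormal hg]
  exact sum_congr rfl fun l _ => by ring

lemma mul_dotProduct_self_le_of_mem_span {M : Matrix n n ℝ} {μ : ι → ℝ} {a : ℝ}
    (hg : ∀ a b, g a ⬝ᵥ g b = if a = b then (1 : ℝ) else 0)
    (hM : ∀ k, M *ᵥ g k = μ k • g k) (ha : ∀ k, a ≤ μ k)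
    {x : n → ℝ} (hx : x ∈ Submodule.span ℝ (Set.range g)) :
    a * (x ⬝ᵥ x) ≤ x ⬝ᵥ M *ᵥ x := by
  obtain ⟨c, rfl⟩ := (Submodule.mem_span_range_iff_exists_fun ℝ).mp hx
  rw [sum_smul_dotProduct_mulVec_sum_smul_of_orthonormal hg hM,
    sum_smul_dotProduct_sum_smul_of_orthonormal hg, mul_sum]
  exact sum_le_sum fun l _ => by nlinarith [ha l, sq_nonneg (c l)]

lemma dotProduct_mulVec_le_of_mem_span {M : Matrix n n ℝ} {μ : ι → ℝ} {a : ℝ}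
    (hg : ∀ a b, g a ⬝ᵥ g b = if a = b then (1 : ℝ) else 0)
    (hM : ∀ k, M *ᵥ g k = μ k • g k) (ha : ∀ k, μ k ≤ a)
    {x : n → ℝ} (hx : x ∈ Submodule.span ℝ (Set.range g)) :
    x ⬝ᵥ M *ᵥ x ≤ a * (x ⬝ᵥ x) := by
  obtain ⟨c, rfl⟩ := (Submodule.mem_span_range_iff_exists_fun ℝ).mp hx
  rw [sum_smul_dotProduct_mulVec_sum_smul_of_orthonormal hg hM,
    sum_smul_dotProduct_sum_smul_of_orthonormal hg, mul_sum]
  exact sum_le_sum fun l _ => by nlinarith [ha l, sq_nonneg (c l)]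

end Orthonormal

section CompleteOrthonormal

variable {n : Type*} [Fintype n] [DecidableEq n] {f : n → n → ℝ}

lemma sum_dotProduct_smul_eq_self_of_orthonormal
    (hf : ∀ a b, f a ⬝ᵥ f b = if a = b then (1 : ℝ) else 0) (x : n → ℝ) :
    ∑ k, (f k ⬝ᵥ x) • f k = x := by
  have hFFt : of f * (of f)ᵀ = 1 := by
    ext a b
    simpa [mul_apply, one_apply, dotProduct] using hf a b
  have hFtF : (of f)ᵀ * of f = 1 := mul_eq_one_comm.mp hFFt
  calc ∑ k, (f k ⬝ᵥ x) • f k = ((of f)ᵀ * of f) *ᵥ x := by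
        rw [← mulVec_mulVec]
        ext a
        simp [mulVec, dotProduct, mul_comm]
    _ = x := by rw [hFtF, one_mulVec]

lemma dotProduct_mulVec_eq_sum_of_orthonormal {M : Matrix n n ℝ} {μ : n → ℝ}
    (hf : ∀ a b, f a ⬝ᵥ f b = if a = b then (1 : ℝ) else 0)
    (hM : ∀ k, M *ᵥ f k = μ k • f k) (x : n → ℝ) :
    x ⬝ᵥ M *ᵥ x = ∑ k, μ k * (f k ⬝ᵥ x) ^ 2 := by
  conv_lhs => rw [← sum_dotProduct_smul_eq_self_of_orthonormal hf x]
  exact sum_smul_dotProduct_mulVec_sum_smul_of_orthonormal hf hM _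

lemma mul_sq_dotProduct_le_dotProduct_mulVec {M : Matrix n n ℝ} {μ : n → ℝ}
    (hf : ∀ a b, f a ⬝ᵥ f b = if a = b then (1 : ℝ) else 0)
    (hM : ∀ k, M *ᵥ f k = μ k • f k) (hμ : ∀ k, 0 ≤ μ k) (x : n → ℝ) (j : n) :
    μ j * (f j ⬝ᵥ x) ^ 2 ≤ x ⬝ᵥ M *ᵥ x := by
  rw [dotProduct_mulVec_eq_sum_of_orthonormal hf hM]
  exact single_le_sum (f := fun k => μ k * (f k ⬝ᵥ x) ^ 2)
    (fun k _ => mul_nonneg (hμ k) (sq_nonneg _)) (mem_univ j)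

end CompleteOrthonormal

lemma eigenvalue_le_of_dotProduct_mulVec_le {d : ℕ} {M N : Matrix (Fin d) (Fin d) ℝ}
    {g h : Fin d → Fin d → ℝ} {μ ν : Fin d → ℝ}
    (hg : ∀ a b, g a ⬝ᵥ g b = if a = b then (1 : ℝ) else 0)
    (hh : ∀ a b, h a ⬝ᵥ h b = if a = b then (1 : ℝ) else 0)
    (hMg : ∀ k, M *ᵥ g k = μ k • g k) (hNh : ∀ k, N *ᵥ h k = ν k • h k)
    (hμ : Antitone μ) (hν : Antitone ν)
    (hMN : ∀ x, x ⬝ᵥ M *ᵥ x ≤ x ⬝ᵥ N *ᵥ x) (i : Fin d) : μ i ≤ ν i := by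
  have hg' : ∀ a b : Iic i, g a ⬝ᵥ g b = if a = b then (1 : ℝ) else 0 := fun a b => by
    rw [hg]; exact if_congr Subtype.ext_iff.symm rfl rfl
  have hh' : ∀ a b : Ici i, h a ⬝ᵥ h b = if a = b then (1 : ℝ) else 0 := fun a b => by
    rw [hh]; exact if_congr Subtype.ext_iff.symm rfl rfl
  set U := Submodule.span ℝ (Set.range fun k : Iic i => g k)
  set W := Submodule.span ℝ (Set.range fun k : Ici i => h k)
  have hU : Module.finrank ℝ U = i + 1 := by
    rw [finrank_span_eq_card (linearIndependent_of_orthonormal hg'), Fintype.card_coe,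
      Fin.card_Iic]
  have hW : Module.finrank ℝ W = d - i := by
    rw [finrank_span_eq_card (linearIndependent_of_orthonormal hh'), Fintype.card_coe,
      Fin.card_Ici]
  -- dimension count: (i + 1) + (d - i) > d
  have hUW : U ⊓ W ≠ ⊥ := by
    intro hbot
    have hsum := Submodule.finrank_sup_add_finrank_inf_eq U W
    have hsup := Submodule.finrank_le (U ⊔ W)
    rw [hbot, finrank_bot, hU, hW] at hsum
    rw [Module.finrank_fin_fun] at hsup
    omega
  obtain ⟨x, ⟨hxU, hxW⟩, hx0⟩ := (Submodule.ne_bot_iff _).mp hUW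
  have hlow : μ i * (x ⬝ᵥ x) ≤ x ⬝ᵥ M *ᵥ x :=
    mul_dotProduct_self_le_of_mem_span hg' (fun k => hMg k) (fun k => hμ (mem_Iic.mp k.2)) hxU
  have hup : x ⬝ᵥ N *ᵥ x ≤ ν i * (x ⬝ᵥ x) :=
    dotProduct_mulVec_le_of_mem_span hh' (fun k => hNh k) (fun k => hν (mem_Ici.mp k.2)) hxW
  have hxx : 0 < x ⬝ᵥ x := lt_of_le_of_ne (Fintype.sum_nonneg fun j => mul_self_nonneg (x j))
    (Ne.symm (dotProduct_self_eq_zero.not.mpr hx0))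
  exact le_of_mul_le_mul_right ((hlow.trans (hMN x)).trans hup) hxx

lemma abs_le_sqrt_mul_sqrt_min_div_max {a b c t : ℝ} (ha : 0 < a) (hb : 0 < b)
    (hab : b * t ^ 2 ≤ c * a) (hba : a * t ^ 2 ≤ c * b) :
    |t| ≤ √c * √(min a b / max a b) := by
  have hc : 0 ≤ c := nonneg_of_mul_nonneg_left ((mul_nonneg hb.le (sq_nonneg t)).trans hab) ha
  have ht : t ^ 2 ≤ c * (min a b / max a b) := by
    rcases le_total a b with hle | hle
    · rw [min_eq_left hle, max_eq_right hle, ← mul_div_assoc, le_div_iff₀ hb]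
      linarith
    · rw [min_eq_right hle, max_eq_left hle, ← mul_div_assoc, le_div_iff₀ ha]
      linarith
  rw [← Real.sqrt_mul hc, ← Real.sqrt_sq_eq_abs]
  exact Real.sqrt_le_sqrt ht

lemma abs_dotProduct_eigenvectors_le {d : ℕ} {M N : Matrix (Fin d) (Fin d) ℝ}
    {g h : Fin d → Fin d → ℝ} {μ ν : Fin d → ℝ}
    (hg : ∀ a b, g a ⬝ᵥ g b = if a = b then (1 : ℝ) else 0)
    (hh : ∀ a b, h a ⬝ᵥ h b = if a = b then (1 : ℝ) else 0)
    (hMg : ∀ k, M *ᵥ g k = μ k • g k) (hNh : ∀ k, N *ᵥ h k = ν k • h k)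
    (hμ : Antitone μ) (hν : Antitone ν) (hμ_pos : ∀ k, 0 < μ k) {c : ℝ} (hc : 0 ≤ c)
    (hMN : ∀ x, x ⬝ᵥ M *ᵥ x ≤ x ⬝ᵥ N *ᵥ x) (hNM : ∀ x, x ⬝ᵥ N *ᵥ x ≤ c * (x ⬝ᵥ M *ᵥ x))
    (i j : Fin d) :
    |h i ⬝ᵥ g j| ≤ √c * √(min (μ i) (μ j) / max (μ i) (μ j)) := by
  have hμν : ∀ k, μ k ≤ ν k := eigenvalue_le_of_dotProduct_mulVec_le hg hh hMg hNh hμ hν hMN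
  have hνμ : ∀ k, ν k ≤ c * μ k :=
    eigenvalue_le_of_dotProduct_mulVec_le (N := c • M) hh hg hNh
      (fun k => by rw [smul_mulVec, hMg, smul_smul]) hν (hμ.const_mul hc)
      (fun x => by rw [smul_mulVec, dotProduct_smul, smul_eq_mul]; exact hNM x)
  have hMgg : g j ⬝ᵥ M *ᵥ g j = μ j := by
    rw [hMg, dotProduct_smul, hg, if_pos rfl, smul_eq_mul, mul_one]
  have hNhh : h i ⬝ᵥ N *ᵥ h i = ν i := by
    rw [hNh, dotProduct_smul, hh, if_pos rfl, smul_eq_mul, mul_one]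
  refine abs_le_sqrt_mul_sqrt_min_div_max (hμ_pos i) (hμ_pos j) ?_ ?_
  · calc μ j * (h i ⬝ᵥ g j) ^ 2 = μ j * (g j ⬝ᵥ h i) ^ 2 := by rw [dotProduct_comm]
      _ ≤ h i ⬝ᵥ M *ᵥ h i :=
        mul_sq_dotProduct_le_dotProduct_mulVec hg hMg (fun k => (hμ_pos k).le) (h i) j
      _ ≤ h i ⬝ᵥ N *ᵥ h i := hMN (h i)
      _ ≤ c * μ i := hNhh ▸ hνμ i
  · calc μ i * (h i ⬝ᵥ g j) ^ 2 ≤ ν i * (h i ⬝ᵥ g j) ^ 2 := by gcongr; exact hμν i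
      _ ≤ g j ⬝ᵥ N *ᵥ g j := mul_sq_dotProduct_le_dotProduct_mulVec hh hNh
          (fun k => (hμ_pos k).le.trans (hμν k)) (g j) i
      _ ≤ c * (g j ⬝ᵥ M *ᵥ g j) := hNM (g j)
      _ = c * μ j := by rw [hMgg]

lemma Matrix.PosSemidef.sqrt_mul_self {n : Type*} [Fintype n] [DecidableEq n]
    {B : Matrix n n ℝ} (hB : B.PosSemidef) : hB.sqrt * hB.sqrt = B := by
  have hU : (star hB.isHermitian.eigenvectorUnitary : Matrix n n ℝ) *
      hB.isHermitian.eigenvectorUnitary.1 = 1 := Unitary.coe_star_mul_self _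
  conv_rhs => rw [hB.isHermitian.spectral_theorem]
  simp only [Unitary.conjStarAlgAut_apply, Matrix.PosSemidef.sqrt, ← Matrix.mul_assoc]
  rw [Matrix.mul_assoc (_ * _) _ hB.isHermitian.eigenvectorUnitary.1, hU, Matrix.mul_one,
    Matrix.mul_assoc hB.isHermitian.eigenvectorUnitary.1, diagonal_mul_diagonal]
  congr 3
  funext i
  simp [Real.mul_self_sqrt (hB.eigenvalues_nonneg i)]

lemma Matrix.PosSemidef.transpose_sqrt {n : Type*} [Fintype n] [DecidableEq n]
    {B : Matrix n n ℝ} (hB : B.PosSemidef) : hB.sqrtᵀ = hB.sqrt := by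
  rw [← conjTranspose_eq_transpose_of_trivial]
  simp [Matrix.PosSemidef.sqrt, Matrix.mul_assoc, Matrix.star_eq_conjTranspose]

section Perturbation

variable {n ι : Type*} [Fintype n] [Fintype ι]

lemma dotProduct_mulVec_comm_of_transpose_eq {S : Matrix n n ℝ} (hS : Sᵀ = S) (x y : n → ℝ) :
    x ⬝ᵥ S *ᵥ y = S *ᵥ x ⬝ᵥ y := by
  rw [dotProduct_mulVec, ← mulVec_transpose, hS]

lemma dotProduct_mulVec_sum_vecMulVec (v : ι → n → ℝ) (x : n → ℝ) :
    x ⬝ᵥ (∑ k, vecMulVec (v k) (v k)) *ᵥ x = ∑ k, (v k ⬝ᵥ x) ^ 2 := by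
  simp [sum_mulVec, vecMulVec_mulVec, sum_dotProduct, dotProduct_comm x, sq]

lemma sq_dotProduct_le_card_mul_sq_mul {v : n → ℝ} {V : ℝ} (hv : ∀ j, |v j| ≤ V) (y : n → ℝ) :
    (v ⬝ᵥ y) ^ 2 ≤ Fintype.card n * V ^ 2 * (y ⬝ᵥ y) := by
  have hvv : v ⬝ᵥ v ≤ Fintype.card n * V ^ 2 := by
    calc v ⬝ᵥ v = ∑ j, |v j| ^ 2 := by simp [dotProduct, sq]
      _ ≤ ∑ _j : n, V ^ 2 := sum_le_sum fun j _ => pow_le_pow_left₀ (abs_nonneg _) (hv j) 2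
      _ = Fintype.card n * V ^ 2 := by simp
  calc (v ⬝ᵥ y) ^ 2 ≤ (v ⬝ᵥ v) * (y ⬝ᵥ y) := by
        simpa [dotProduct, sq] using sum_mul_sq_le_sq_mul_sq univ v y
    _ ≤ Fintype.card n * V ^ 2 * (y ⬝ᵥ y) :=
        mul_le_mul_of_nonneg_right hvv (Fintype.sum_nonneg fun j => mul_self_nonneg (y j))

lemma dotProduct_mulVec_add_conj_sum_vecMulVec {S : Matrix n n ℝ} (hS : Sᵀ = S)
    (B : Matrix n n ℝ) (v : ι → n → ℝ) (x : n → ℝ) :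
    x ⬝ᵥ (B + S * (∑ k, vecMulVec (v k) (v k)) * S) *ᵥ x =
      x ⬝ᵥ B *ᵥ x + ∑ k, (v k ⬝ᵥ S *ᵥ x) ^ 2 := by
  rw [add_mulVec, dotProduct_add, ← mulVec_mulVec, ← mulVec_mulVec,
    dotProduct_mulVec_comm_of_transpose_eq hS, dotProduct_mulVec_sum_vecMulVec]

lemma dotProduct_mulVec_le_add_conj_sum_vecMulVec {S : Matrix n n ℝ} (hS : Sᵀ = S)
    (B : Matrix n n ℝ) (v : ι → n → ℝ) (x : n → ℝ) :
    x ⬝ᵥ B *ᵥ x ≤ x ⬝ᵥ (B + S * (∑ k, vecMulVec (v k) (v k)) * S) *ᵥ x := by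
  rw [dotProduct_mulVec_add_conj_sum_vecMulVec hS]
  exact le_add_of_nonneg_right (sum_nonneg fun k _ => sq_nonneg _)

lemma dotProduct_mulVec_add_conj_sum_vecMulVec_le {S B : Matrix n n ℝ} (hS : Sᵀ = S)
    (hSB : S * S = B) {v : ι → n → ℝ} {V : ℝ} (hv : ∀ k j, |v k j| ≤ V) (x : n → ℝ) :
    x ⬝ᵥ (B + S * (∑ k, vecMulVec (v k) (v k)) * S) *ᵥ x ≤
      (1 + Fintype.card n * Fintype.card ι * V ^ 2) * (x ⬝ᵥ B *ᵥ x) := by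
  have hBx : x ⬝ᵥ B *ᵥ x = S *ᵥ x ⬝ᵥ S *ᵥ x := by
    rw [← hSB, ← mulVec_mulVec, dotProduct_mulVec_comm_of_transpose_eq hS]
  have hsum : ∑ k, (v k ⬝ᵥ S *ᵥ x) ^ 2 ≤
      ∑ _k : ι, Fintype.card n * V ^ 2 * (x ⬝ᵥ B *ᵥ x) :=
    sum_le_sum fun k _ => hBx ▸ sq_dotProduct_le_card_mul_sq_mul (hv k) (S *ᵥ x)
  rw [sum_const, card_univ, nsmul_eq_mul] at hsum
  rw [dotProduct_mulVec_add_conj_sum_vecMulVec hS]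
  linarith

end Perturbation

lemma one_le_mul_sq_of_one_div_sqrt_le {d V : ℝ} (hd : 0 < d) (hV : 1 / √d ≤ V) :
    1 ≤ d * V ^ 2 := by
  have h := pow_le_pow_left₀ (by positivity) hV 2
  rw [div_pow, one_pow, Real.sq_sqrt hd.le, div_le_iff₀ hd] at h
  linarith

lemma sqrt_one_add_mul_le_of_rec {d : ℕ} {V : ℝ} (hdV : 1 ≤ d * V ^ 2) {C : ℕ → ℝ}
    (hC0 : C 0 = 1)
    (hCrec : ∀ k : ℕ, C (k + 1) = 5 * (d : ℝ) ^ 7 * V ^ 4 * C k ^ 5 *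
      √(1 + (d : ℝ) * (k : ℝ) * V ^ 2)) (k : ℕ) :
    √(1 + (d : ℝ) * (k : ℝ) * V ^ 2) ≤ C k := by
  have hd : (1 : ℝ) ≤ d := Nat.one_le_cast.mpr
    (Nat.pos_of_ne_zero fun h => by simp [h] at hdV; linarith)
  induction k with
  | zero => simp [hC0]
  | succ k ih =>
    have hX : 0 ≤ 1 + (d : ℝ) * k * V ^ 2 := by positivity
    have hCk : 1 ≤ C k := (Real.one_le_sqrt.mpr (by nlinarith)).trans ih
    -- `1 + (k + 1) a ≤ (1 + a)² (1 + k a)` for `a = d V²`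
    have hstep : √(1 + (d : ℝ) * (k + 1 : ℕ) * V ^ 2) ≤ (1 + d * V ^ 2) * √(1 + d * k * V ^ 2) := by
      rw [← Real.sqrt_sq (by positivity : 0 ≤ 1 + (d : ℝ) * V ^ 2), ← Real.sqrt_mul (sq_nonneg _)]
      refine Real.sqrt_le_sqrt ?_
      push_cast
      nlinarith [mul_nonneg hX (sq_nonneg ((d : ℝ) * V ^ 2))]
    have hcoef : 1 + d * V ^ 2 ≤ 5 * (d : ℝ) ^ 7 * V ^ 4 * C k ^ 5 := by
      have h1 : 1 ≤ (d : ℝ) ^ 5 * C k ^ 5 :=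
        one_le_mul_of_one_le_of_one_le (one_le_pow₀ hd) (one_le_pow₀ hCk)
      calc 1 + d * V ^ 2 ≤ 5 * (d * V ^ 2) ^ 2 := by nlinarith
        _ ≤ 5 * (d * V ^ 2) ^ 2 * ((d : ℝ) ^ 5 * C k ^ 5) :=
          le_mul_of_one_le_right (by positivity) h1
        _ = 5 * (d : ℝ) ^ 7 * V ^ 4 * C k ^ 5 := by ring
    rw [hCrec k]
    exact hstep.trans (mul_le_mul_of_nonneg_right hcoef (Real.sqrt_nonneg _))

theorem eigenvector_bound_symmetric_general
    {d m : ℕ}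
    (B : Matrix (Fin d) (Fin d) ℝ) (hB : B.PosDef)
    (lam : Fin d → ℝ) (hlam_anti : Antitone lam) (hlam_pos : ∀ i, 0 < lam i)
    (f : Fin d → Fin d → ℝ)
    (hf_orth : ∀ i j, f i ⬝ᵥ f j = if i = j then (1 : ℝ) else 0)
    (hf_eig : ∀ j, B.mulVec (f j) = lam j • f j)
    (V : ℝ) (hV : 1 / Real.sqrt d ≤ V)
    (v : Fin m → Fin d → ℝ) (hv : ∀ k j, |v k j| ≤ V)
    (A : Matrix (Fin d) (Fin d) ℝ)
    (hA : A = B + hB.posSemidef.sqrt * (∑ k, Matrix.vecMulVec (v k) (v k)) *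
      hB.posSemidef.sqrt)
    (ν : Fin d → ℝ) (hν_anti : Antitone ν)
    (e : Fin d → Fin d → ℝ)
    (he_orth : ∀ i j, e i ⬝ᵥ e j = if i = j then (1 : ℝ) else 0)
    (he_eig : ∀ i, A.mulVec (e i) = ν i • e i)
    (C : ℕ → ℝ) (hC0 : C 0 = 1)
    (hCrec : ∀ k : ℕ, C (k + 1) = 5 * (d : ℝ) ^ 7 * V ^ 4 * C k ^ 5 *
      Real.sqrt (1 + (d : ℝ) * (k : ℝ) * V ^ 2)) :
    ∀ i j : Fin d,
      |e i ⬝ᵥ f j| ≤ C m * Real.sqrt (min (lam i) (lam j) / max (lam i) (lam j)) := by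
  intro i j
  have hd : (0 : ℝ) < d := Nat.cast_pos.mpr i.pos
  have hS := hB.posSemidef.transpose_sqrt
  have hBA (x : Fin d → ℝ) : x ⬝ᵥ B *ᵥ x ≤ x ⬝ᵥ A *ᵥ x :=
    hA ▸ dotProduct_mulVec_le_add_conj_sum_vecMulVec hS B v x
  have hAB (x : Fin d → ℝ) : x ⬝ᵥ A *ᵥ x ≤ (1 + d * m * V ^ 2) * (x ⬝ᵥ B *ᵥ x) := by
    simpa only [hA, Fintype.card_fin] using
      dotProduct_mulVec_add_conj_sum_vecMulVec_le hS hB.posSemidef.sqrt_mul_self hv x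
  have hCm : √(1 + d * m * V ^ 2) ≤ C m :=
    sqrt_one_add_mul_le_of_rec (one_le_mul_sq_of_one_div_sqrt_le hd hV) hC0 hCrec m
  calc |e i ⬝ᵥ f j| ≤ √(1 + d * m * V ^ 2) * √(min (lam i) (lam j) / max (lam i) (lam j)) :=
        abs_dotProduct_eigenvectors_le hf_orth he_orth hf_eig he_eig hlam_anti hν_anti hlam_pos
          (by positivity) hBA hAB i j
    _ ≤ C m * √(min (lam i) (lam j) / max (lam i) (lam j)) := by gcongr

/-- **Theorem 1 (symmetric form).** If `B` is a `d × d` real symmetric positive definite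
matrix with decreasingly ordered eigenvalues `lam` and orthonormal eigenvectors `f`,
`A = B + √B (∑ₖ v⁽ᵏ⁾ (v⁽ᵏ⁾)ᵀ) √B` with `‖v⁽ᵏ⁾‖_∞ ≤ V` and `V ≥ 1/√d`, and `e` is an
orthonormal system of eigenvectors of `A` ordered by decreasing eigenvalues, then
`|⟨e i, f j⟩| ≤ C m * √(min(λᵢ,λⱼ)/max(λᵢ,λⱼ))` where `C 0 = 1` and
`C (k+1) = 5 d⁷ V⁴ (C k)⁵ √(1 + d k V²)`. -/
theorem eigenvector_bound_symmetric
    {d m : ℕ} (hd : 0 < d)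
    (B : Matrix (Fin d) (Fin d) ℝ) (hB : B.PosDef) (hBsymm : B.IsSymm)
    (lam : Fin d → ℝ) (hlam_anti : Antitone lam) (hlam_pos : ∀ i, 0 < lam i)
    (f : Fin d → Fin d → ℝ)
    (hf_orth : ∀ i j, f i ⬝ᵥ f j = if i = j then (1 : ℝ) else 0)
    (hf_eig : ∀ j, B.mulVec (f j) = lam j • f j)
    (V : ℝ) (hV : 1 / Real.sqrt d ≤ V)
    (v : Fin m → Fin d → ℝ) (hv : ∀ k j, |v k j| ≤ V)
    (A : Matrix (Fin d) (Fin d) ℝ)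
    (hA : A = B + hB.posSemidef.sqrt * (∑ k, Matrix.vecMulVec (v k) (v k)) *
      hB.posSemidef.sqrt)
    (ν : Fin d → ℝ) (hν_anti : Antitone ν)
    (e : Fin d → Fin d → ℝ)
    (he_orth : ∀ i j, e i ⬝ᵥ e j = if i = j then (1 : ℝ) else 0)
    (he_eig : ∀ i, A.mulVec (e i) = ν i • e i)
    (C : ℕ → ℝ) (hC0 : C 0 = 1)
    (hCrec : ∀ k : ℕ, C (k + 1) = 5 * (d : ℝ) ^ 7 * V ^ 4 * C k ^ 5 *
      Real.sqrt (1 + (d : ℝ) * (k : ℝ) * V ^ 2)) :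
    ∀ i j : Fin d,
      |e i ⬝ᵥ f j| ≤ C m * Real.sqrt (min (lam i) (lam j) / max (lam i) (lam j)) :=
  eigenvector_bound_symmetric_general B hB lam hlam_anti hlam_pos f hf_orth hf_eig V hV v hv A hA ν
    hν_anti e he_orth he_eig C hC0 hCrec
end

section
/- Let D = diag(λ₁,…,λ_d) with λ₁ ≥ … ≥ λ_d > 0, let V ≥ 1/√d, and let v^{(1)},…,v^{(m)},… be vectors in ℝ^d with ‖v^{(i)}‖_∞ ≤ V for all i. For m ∈ ℕ set A^{(m)} = D + √D (Σ_{i=1}^m v^{(i)} (v^{(i)})ᵀ) √D, let ν₁^{(m)} ≥ … ≥ ν_d^{(m)} be the eigenvalues of A^{(m)} and (e₁^{(m)},…,e_d^{(m)}) a corresponding orthonormal system of eigenvectors. Then for all i,j ∈ {1,…,d} and all m ∈ ℕ, |[e_i^{(m)}]_j| ≤ C_m · √(min(λ_i,λ_j)/max(λ_i,λ_j)), where C₀ = 1 and C_{m+1} = 5 d⁷ V⁴ C_m⁵ √(1 + d m V²). -/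
open Matrix Finset

lemma complete_of_orthonormal {d : ℕ} (e : Fin d → Fin d → ℝ)
    (h : ∀ i j, e i ⬝ᵥ e j = if i = j then (1:ℝ) else 0) (j k : Fin d) :
    (∑ l, e l j * e l k) = if j = k then (1:ℝ) else 0 := by
  have hE : (Matrix.of e) * (Matrix.of e)ᵀ = 1 := by
    ext a b
    simpa [Matrix.mul_apply, Matrix.one_apply, dotProduct] using h a b
  have hE' : (Matrix.of e)ᵀ * (Matrix.of e) = 1 := mul_eq_one_comm.mp hE
  have := congrFun (congrFun hE' j) k
  simpa [Matrix.mul_apply, Matrix.one_apply] using this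

lemma exists_constrained_vector {d : ℕ} (e : Fin d → Fin d → ℝ)
    (p q : Fin d → Prop) [DecidablePred p] [DecidablePred q]
    (hcard : Fintype.card {j // p j} + Fintype.card {l // q l} < d) :
    ∃ x : Fin d → ℝ, x ≠ 0 ∧ (∀ j, p j → x j = 0) ∧ (∀ l, q l → x ⬝ᵥ e l = 0) := by
  let f : (Fin d → ℝ) →ₗ[ℝ] ({j // p j} → ℝ) × ({l // q l} → ℝ) :=
    LinearMap.prod
      (LinearMap.pi fun j => LinearMap.proj j.1)
      (LinearMap.pi fun l => { toFun := fun x => x ⬝ᵥ e l.1,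
                               map_add' := fun a b => add_dotProduct a b (e l.1),
                               map_smul' := fun c a => smul_dotProduct c a (e l.1) })
  have hker : LinearMap.ker f ≠ ⊥ := by
    intro hbot
    have hinj : Function.Injective f := LinearMap.ker_eq_bot.mp hbot
    have h2 := LinearMap.finrank_le_finrank_of_injective hinj
    rw [Module.finrank_pi, Module.finrank_prod, Module.finrank_pi, Module.finrank_pi] at h2
    simp [Fintype.card_fin] at h2
    omega
  obtain ⟨x, hx, hx0⟩ := Submodule.exists_mem_ne_zero_of_ne_bot hker
  refine ⟨x, hx0, ?_, ?_⟩
  · intro j hj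
    have := congrFun (congrArg Prod.fst (LinearMap.mem_ker.mp hx)) ⟨j, hj⟩
    simpa [f] using this
  · intro l hl
    have := congrFun (congrArg Prod.snd (LinearMap.mem_ker.mp hx)) ⟨l, hl⟩
    simpa [f] using this

lemma card_lt_subtype {d : ℕ} (i : Fin d) :
    Fintype.card {a : Fin d // i < a} + Fintype.card {l : Fin d // l < i} < d := by
  have h1 : Fintype.card {l : Fin d // l < i} = i := by
    rw [Fintype.card_subtype]
    rw [show Finset.filter (fun x => x < i) Finset.univ = Finset.Iio i by ext; simp]
    exact Fin.card_Iio i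
  have h2 : Fintype.card {a : Fin d // i < a} = d - 1 - i := by
    rw [Fintype.card_subtype]
    rw [show Finset.filter (fun x => i < x) Finset.univ = Finset.Ioi i by ext; simp]
    exact Fin.card_Ioi i
  rw [h1, h2]
  have := i.isLt
  omega

lemma card_lt_subtype' {d : ℕ} (i : Fin d) :
    Fintype.card {a : Fin d // a < i} + Fintype.card {l : Fin d // i < l} < d := by
  have := card_lt_subtype i
  omega

lemma mulVec_coord {d m : ℕ} (lam : Fin d → ℝ) (v : ℕ → Fin d → ℝ)
    (A : Matrix (Fin d) (Fin d) ℝ)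
    (hAab : ∀ a b, A a b = (if a = b then lam a else 0)
      + Real.sqrt (lam a) * (∑ k ∈ Finset.range m, v k a * v k b) * Real.sqrt (lam b))
    (x : Fin d → ℝ) (a : Fin d) :
    A.mulVec x a = lam a * x a
      + Real.sqrt (lam a) * ∑ k ∈ Finset.range m, v k a * ∑ b, v k b * (Real.sqrt (lam b) * x b) := by
  rw [Matrix.mulVec, dotProduct]
  simp only [hAab, add_mul]
  rw [Finset.sum_add_distrib]
  congr 1
  · simp [ite_mul]
  · simp only [Finset.sum_mul, Finset.mul_sum]
    rw [Finset.sum_comm]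
    exact Finset.sum_congr rfl fun k _ => Finset.sum_congr rfl fun b _ => by ring

lemma quad_form {d m : ℕ} (lam : Fin d → ℝ) (v : ℕ → Fin d → ℝ)
    (A : Matrix (Fin d) (Fin d) ℝ)
    (hAab : ∀ a b, A a b = (if a = b then lam a else 0)
      + Real.sqrt (lam a) * (∑ k ∈ Finset.range m, v k a * v k b) * Real.sqrt (lam b))
    (x : Fin d → ℝ) :
    x ⬝ᵥ A.mulVec x = (∑ a, lam a * x a ^ 2)
      + ∑ k ∈ Finset.range m, (∑ a, v k a * (Real.sqrt (lam a) * x a))^2 := by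
  rw [dotProduct]
  simp only [mulVec_coord lam v A hAab x, mul_add]
  rw [Finset.sum_add_distrib]
  congr 1
  · exact Finset.sum_congr rfl fun a _ => by ring
  · simp only [sq, Finset.sum_mul_sum, Finset.mul_sum, Finset.sum_mul]
    rw [Finset.sum_comm]
    exact Finset.sum_congr rfl fun k _ => Finset.sum_congr rfl fun a _ =>
      Finset.sum_congr rfl fun b _ => by ring

lemma Cfacts (D V : ℝ) (hD : 1 ≤ D) (hu : 1 ≤ Real.sqrt D * V) (hV0 : 0 < V)
    (C : ℕ → ℝ) (hC0 : C 0 = 1)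
    (hCrec : ∀ k : ℕ, C (k + 1) = 5 * D ^ 7 * V ^ 4 * C k ^ 5 *
      Real.sqrt (1 + D * (k : ℝ) * V ^ 2)) :
    ∀ m : ℕ, ((m : ℝ) + 1 ≤ C m ∧
      (1 ≤ m → max (2 * (m : ℝ) * V ^ 2 * Real.sqrt D) (Real.sqrt 2) *
        Real.sqrt (1 + D * (m : ℝ) * V ^ 2) ≤ C m)) := by
  have hD0 : (0:ℝ) < D := lt_of_lt_of_le one_pos hD
  set sd := Real.sqrt D with hsd
  have hsd1 : 1 ≤ sd := Real.one_le_sqrt.mpr hD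
  have hsd2 : sd ^ 2 = D := Real.sq_sqrt hD0.le
  set u := sd * V with hudef
  have hDV4 : D ^ 7 * V ^ 4 = D ^ 5 * u ^ 4 := by
    rw [hudef, mul_pow, ← hsd2]; ring
  have hD5 : 1 ≤ D ^ 5 := one_le_pow₀ hD
  have hu4 : 1 ≤ u ^ 4 := one_le_pow₀ hu
  have hDV4' : 1 ≤ D ^ 7 * V ^ 4 := by rw [hDV4]; nlinarith
  have hDV2 : 1 ≤ D * V ^ 2 := by nlinarith [hsd2]
  have hsqrt1 : ∀ k : ℕ, 1 ≤ Real.sqrt (1 + D * (k : ℝ) * V ^ 2) := by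
    intro k
    apply Real.one_le_sqrt.mpr
    have : (0:ℝ) ≤ (k:ℝ) := Nat.cast_nonneg k
    nlinarith
  intro m
  induction m with
  | zero => simp [hC0]
  | succ m ih =>
    obtain ⟨ih1, _⟩ := ih
    have hCm1 : 1 ≤ C m := by
      have : (0:ℝ) ≤ (m:ℝ) := Nat.cast_nonneg m
      linarith
    have hCm0 : (0:ℝ) < C m := by linarith
    have hC5 : C m ≤ C m ^ 5 := le_self_pow₀ hCm1 (by norm_num)
    have hC50 : (0:ℝ) < C m ^ 5 := pow_pos hCm0 5
    constructor
    · rw [hCrec m]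
      have h5 : 5 * C m ≤ 5 * D ^ 7 * V ^ 4 * C m ^ 5 * Real.sqrt (1 + D * m * V ^ 2) := by
        calc 5 * C m ≤ 5 * C m ^ 5 := by linarith
          _ ≤ 5 * C m ^ 5 * (D ^ 7 * V ^ 4) := le_mul_of_one_le_right (by linarith) hDV4'
          _ = 5 * D ^ 7 * V ^ 4 * C m ^ 5 := by ring
          _ ≤ 5 * D ^ 7 * V ^ 4 * C m ^ 5 * Real.sqrt (1 + D * m * V ^ 2) :=
              le_mul_of_one_le_right (by nlinarith) (hsqrt1 m)
      push_cast
      nlinarith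
    · intro _
      rw [hCrec m]
      have hs2 : (0:ℝ) ≤ Real.sqrt 2 := Real.sqrt_nonneg 2
      have hm0 : (0:ℝ) ≤ (m:ℝ) := Nat.cast_nonneg m
      have hstepi : Real.sqrt (1 + D * ((m:ℕ) + 1 : ℝ) * V ^ 2) ≤
          Real.sqrt 2 * sd * V * Real.sqrt (1 + D * (m : ℝ) * V ^ 2) := by
        have heq : Real.sqrt 2 * sd * V * Real.sqrt (1 + D * (m : ℝ) * V ^ 2)
            = Real.sqrt (2 * D * V ^ 2 * (1 + D * (m : ℝ) * V ^ 2)) := by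
          rw [show 2 * D * V ^ 2 * (1 + D * (m : ℝ) * V ^ 2)
              = 2 * (D * (V ^ 2 * (1 + D * (m : ℝ) * V ^ 2))) by ring,
            Real.sqrt_mul (by norm_num), Real.sqrt_mul hD0.le,
            Real.sqrt_mul (sq_nonneg V), Real.sqrt_sq hV0.le]
          ring
        rw [heq]
        apply Real.sqrt_le_sqrt
        have hkey := mul_le_mul_of_nonneg_left hDV2
          (mul_nonneg (mul_nonneg hm0 hD0.le) (sq_nonneg V))
        nlinarith [hDV2]
      have hstepii : max (2 * ((m:ℕ) + 1 : ℝ) * V ^ 2 * sd) (Real.sqrt 2) * (Real.sqrt 2 * sd * V)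
          ≤ 5 * D ^ 7 * V ^ 4 * C m ^ 5 := by
        rw [max_mul_of_nonneg _ _ (by positivity)]
        apply max_le
        · have h2 : Real.sqrt 2 ≤ 3 / 2 := by
            rw [show (3:ℝ)/2 = Real.sqrt ((3/2)^2) by rw [Real.sqrt_sq]; norm_num]
            apply Real.sqrt_le_sqrt; norm_num
          have hkey : 2 * ((m:ℕ)+1:ℝ) * V ^ 2 * sd * (Real.sqrt 2 * sd * V)
              = (2 * Real.sqrt 2 * ((m:ℝ)+1)) * (V ^ 3 * D) := by
            rw [← hsd2]; push_cast; ring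
          rw [hkey]
          have hv3d : (0:ℝ) < V ^ 3 * D := by positivity
          have t1 : 2 * Real.sqrt 2 * ((m:ℝ)+1) ≤ 3 * C m :=
            mul_le_mul (by linarith) ih1 (by linarith) (by norm_num)
          have h6 : 1 ≤ D ^ 5 * sd * u := by
            have h7 : 1 ≤ D ^ 5 * sd := by nlinarith
            nlinarith
          have hexp : 5 * D ^ 7 * V ^ 4 * C m ^ 5
              = 5 * (D ^ 5 * sd * u) * C m ^ 5 * (V ^ 3 * D) := by
            rw [hudef, ← hsd2]; ring
          rw [hexp]
          have t2 : 3 * C m ≤ 5 * (D ^ 5 * sd * u) * C m ^ 5 := by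
            calc 3 * C m ≤ 5 * C m ^ 5 := by linarith
              _ ≤ 5 * C m ^ 5 * (D ^ 5 * sd * u) := le_mul_of_one_le_right (by linarith) h6
              _ = 5 * (D ^ 5 * sd * u) * C m ^ 5 := by ring
          exact mul_le_mul_of_nonneg_right (le_trans t1 t2) hv3d.le
        · have h22 : Real.sqrt 2 * Real.sqrt 2 = 2 := Real.mul_self_sqrt (by norm_num)
          have h2 : Real.sqrt 2 * (Real.sqrt 2 * sd * V) = 2 * u := by
            calc Real.sqrt 2 * (Real.sqrt 2 * sd * V) = Real.sqrt 2 * Real.sqrt 2 * (sd * V) := by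
                  ring
              _ = 2 * u := by rw [h22, hudef]
          have hexp2 : 5 * D ^ 7 * V ^ 4 * C m ^ 5 = 5 * (D ^ 5 * u ^ 4) * C m ^ 5 := by
            rw [← hDV4]; ring
          rw [h2, hexp2]
          have hu1 : u ≤ u ^ 4 := le_self_pow₀ hu (by norm_num)
          have hu0 : (0:ℝ) < u := by linarith
          have hDC : 1 ≤ D ^ 5 * C m ^ 5 := by
            have h1 := one_le_pow₀ hCm1 (n := 5)
            have := mul_le_mul hD5 h1 zero_le_one (le_trans zero_le_one hD5)
            linarith
          calc 2 * u ≤ 5 * u ^ 4 := by linarith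
            _ ≤ 5 * u ^ 4 * (D ^ 5 * C m ^ 5) :=
                le_mul_of_one_le_right (by linarith) hDC
            _ = 5 * (D ^ 5 * u ^ 4) * C m ^ 5 := by ring
      push_cast
      have hmax0 : (0:ℝ) ≤ max (2 * ((m:ℕ) + 1 : ℝ) * V ^ 2 * sd) (Real.sqrt 2) :=
        le_trans hs2 (le_max_right _ _)
      calc max (2 * ((m:ℕ)+1:ℝ) * V ^ 2 * sd) (Real.sqrt 2) * Real.sqrt (1 + D * ((m:ℕ)+1:ℝ) * V ^ 2)
          ≤ max (2 * ((m:ℕ)+1:ℝ) * V ^ 2 * sd) (Real.sqrt 2) *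
            (Real.sqrt 2 * sd * V * Real.sqrt (1 + D * (m:ℝ) * V ^ 2)) :=
            mul_le_mul_of_nonneg_left hstepi hmax0
        _ = max (2 * ((m:ℕ)+1:ℝ) * V ^ 2 * sd) (Real.sqrt 2) * (Real.sqrt 2 * sd * V) *
            Real.sqrt (1 + D * (m:ℝ) * V ^ 2) := by ring
        _ ≤ 5 * D ^ 7 * V ^ 4 * C m ^ 5 * Real.sqrt (1 + D * (m:ℝ) * V ^ 2) :=
            mul_le_mul_of_nonneg_right hstepii (Real.sqrt_nonneg _)

set_option maxHeartbeats 1000000 in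
/-- **Theorem 2 (diagonal form, sum of m rank-one perturbations).** -/
theorem eigenvector_bound_rank_m
    {d : ℕ} (hd : 0 < d)
    (lam : Fin d → ℝ) (hlam_anti : Antitone lam) (hlam_pos : ∀ i, 0 < lam i)
    (V : ℝ) (hV : 1 / Real.sqrt d ≤ V)
    (v : ℕ → Fin d → ℝ) (hv : ∀ k j, |v k j| ≤ V)
    (A : ℕ → Matrix (Fin d) (Fin d) ℝ)
    (hA : ∀ m : ℕ, A m = Matrix.diagonal lam +
      (Matrix.diagonal fun i => Real.sqrt (lam i)) *
        (∑ k ∈ Finset.range m, Matrix.vecMulVec (v k) (v k)) *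
      (Matrix.diagonal fun i => Real.sqrt (lam i)))
    (ν : ℕ → Fin d → ℝ) (hν_anti : ∀ m, Antitone (ν m))
    (e : ℕ → Fin d → Fin d → ℝ)
    (he_orth : ∀ m i j, e m i ⬝ᵥ e m j = if i = j then (1 : ℝ) else 0)
    (he_eig : ∀ m i, (A m).mulVec (e m i) = ν m i • e m i)
    (C : ℕ → ℝ) (hC0 : C 0 = 1)
    (hCrec : ∀ k : ℕ, C (k + 1) = 5 * (d : ℝ) ^ 7 * V ^ 4 * C k ^ 5 *
      Real.sqrt (1 + (d : ℝ) * (k : ℝ) * V ^ 2)) :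
    ∀ (m : ℕ) (i j : Fin d),
      |e m i j| ≤ C m * Real.sqrt (min (lam i) (lam j) / max (lam i) (lam j)) := by
  intro m i j
  have hd1 : (1:ℝ) ≤ (d:ℝ) := by exact_mod_cast hd
  have hd0 : (0:ℝ) < (d:ℝ) := by linarith
  have hsd0 : 0 < Real.sqrt d := Real.sqrt_pos.mpr hd0
  have hV0 : 0 < V := lt_of_lt_of_le (by positivity) hV
  have hu : 1 ≤ Real.sqrt d * V := by
    have := (div_le_iff₀ hsd0).mp hV
    linarith
  -- entries of A m
  have hAab : ∀ a b, A m a b = (if a = b then lam a else 0)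
      + Real.sqrt (lam a) * (∑ k ∈ Finset.range m, v k a * v k b) * Real.sqrt (lam b) := by
    intro a b
    rw [hA m]
    simp [Matrix.add_apply, Matrix.mul_apply, Matrix.diagonal_apply, Matrix.vecMulVec_apply,
      Matrix.sum_apply, Finset.sum_ite_eq, Finset.sum_ite_eq', Finset.mul_sum, Finset.sum_mul,
      Matrix.diagonal_mul, Matrix.mul_diagonal]
  -- completeness
  have hcomp : ∀ a b : Fin d, (∑ l, e m l a * e m l b) = if a = b then (1:ℝ) else 0 :=
    complete_of_orthonormal (e m) (he_orth m)
  -- Parseval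
  have hPars : ∀ x : Fin d → ℝ, (∑ l, (x ⬝ᵥ e m l)^2) = x ⬝ᵥ x := by
    intro x
    have h1 : ∀ l, (x ⬝ᵥ e m l)^2 = ∑ a, ∑ b, x a * x b * (e m l a * e m l b) := by
      intro l
      rw [dotProduct, sq, Finset.sum_mul_sum]
      exact Finset.sum_congr rfl fun a _ => Finset.sum_congr rfl fun b _ => by ring
    simp only [h1]
    rw [Finset.sum_comm]
    have h2 : ∀ a, (∑ l, ∑ b, x a * x b * (e m l a * e m l b)) = x a * x a := by
      intro a
      rw [Finset.sum_comm]
      have h3 : ∀ b, (∑ l, x a * x b * (e m l a * e m l b))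
          = x a * x b * (if a = b then (1:ℝ) else 0) := by
        intro b
        rw [← hcomp a b, Finset.mul_sum]
      simp only [h3, mul_ite, mul_one, mul_zero]
      simp
    simp only [h2]
    rw [dotProduct]
  -- expansion of quadratic form in eigenbasis
  have hxAx : ∀ x : Fin d → ℝ, x ⬝ᵥ (A m).mulVec x = ∑ l, ν m l * (x ⬝ᵥ e m l)^2 := by
    intro x
    have hxexp : x = ∑ l, (x ⬝ᵥ e m l) • e m l := by
      funext b
      rw [Finset.sum_apply]
      simp only [Pi.smul_apply, smul_eq_mul]
      have h1 : ∀ l, (x ⬝ᵥ e m l) * e m l b = ∑ a, x a * (e m l a * e m l b) := by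
        intro l
        rw [dotProduct, Finset.sum_mul]
        exact Finset.sum_congr rfl fun a _ => by ring
      simp only [h1]
      rw [Finset.sum_comm]
      have h2 : ∀ a, (∑ l, x a * (e m l a * e m l b)) = x a * (if a = b then (1:ℝ) else 0) := by
        intro a
        rw [← hcomp a b, Finset.mul_sum]
      simp only [h2, mul_ite, mul_one, mul_zero]
      simp
    have h1 : (A m).mulVec x = ∑ l, ((x ⬝ᵥ e m l) * ν m l) • e m l := by
      conv_lhs => rw [hxexp]
      rw [show (A m).mulVec (∑ l, (x ⬝ᵥ e m l) • e m l)
          = (A m).mulVecLin (∑ l, (x ⬝ᵥ e m l) • e m l) from rfl]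
      rw [map_sum]
      refine Finset.sum_congr rfl fun l _ => ?_
      rw [_root_.map_smul, Matrix.mulVecLin_apply, he_eig m l, smul_smul]
    rw [h1]
    have hds : x ⬝ᵥ (∑ l, ((x ⬝ᵥ e m l) * ν m l) • e m l)
        = ∑ l, x ⬝ᵥ (((x ⬝ᵥ e m l) * ν m l) • e m l) := by
      simp only [dotProduct, Finset.sum_apply, Pi.smul_apply, smul_eq_mul, Finset.mul_sum]
      rw [Finset.sum_comm]
    rw [hds]
    refine Finset.sum_congr rfl fun l _ => ?_
    rw [dotProduct_smul, smul_eq_mul]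
    ring
  -- value of eigenvalue as quadratic form
  have hνval : ∀ i', ν m i' = e m i' ⬝ᵥ (A m).mulVec (e m i') := by
    intro i'
    rw [he_eig m i', dotProduct_smul, smul_eq_mul, he_orth m i' i']
    simp
  have hxxpos : ∀ x : Fin d → ℝ, x ≠ 0 → 0 < x ⬝ᵥ x := by
    intro x hx0
    obtain ⟨a, ha⟩ := Function.ne_iff.mp hx0
    rw [dotProduct]
    exact Finset.sum_pos' (fun b _ => mul_self_nonneg _)
      ⟨a, Finset.mem_univ a, mul_self_pos.mpr ha⟩
  -- F1 : lam i ≤ ν m i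
  have hF1 : lam i ≤ ν m i := by
    obtain ⟨x, hx0, hxp, hxq⟩ := exists_constrained_vector (e m)
      (fun a => i < a) (fun l => l < i) (card_lt_subtype i)
    have hxx := hxxpos x hx0
    have hup : x ⬝ᵥ (A m).mulVec x ≤ ν m i * (x ⬝ᵥ x) := by
      rw [hxAx x, ← hPars x, Finset.mul_sum]
      refine Finset.sum_le_sum fun l _ => ?_
      by_cases hl : l < i
      · rw [hxq l hl]
        simp
      · have hle : ν m l ≤ ν m i := hν_anti m (le_of_not_gt hl)
        nlinarith [sq_nonneg (x ⬝ᵥ e m l)]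
    have hlow : lam i * (x ⬝ᵥ x) ≤ x ⬝ᵥ (A m).mulVec x := by
      rw [quad_form lam v (A m) hAab x]
      have h1 : ∀ a, lam i * (x a * x a) ≤ lam a * x a ^ 2 := by
        intro a
        by_cases hxa : x a = 0
        · simp [hxa]
        · have hai : a ≤ i := le_of_not_gt (fun h => hxa (hxp a h))
          have := hlam_anti hai
          nlinarith [mul_self_nonneg (x a)]
      calc lam i * (x ⬝ᵥ x) = ∑ a, lam i * (x a * x a) := by
              rw [dotProduct, Finset.mul_sum]
        _ ≤ ∑ a, lam a * x a ^ 2 := Finset.sum_le_sum fun a _ => h1 a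
        _ ≤ _ := le_add_of_nonneg_right (Finset.sum_nonneg fun k _ => sq_nonneg _)
    exact le_of_mul_le_mul_right (le_trans hlow hup) hxx
  -- F2 : ν m i ≤ lam i * (1 + d m V^2)
  have hF2 : ν m i ≤ lam i * (1 + (d:ℝ) * (m:ℝ) * V^2) := by
    obtain ⟨x, hx0, hxp, hxq⟩ := exists_constrained_vector (e m)
      (fun a => a < i) (fun l => i < l) (card_lt_subtype' i)
    have hxx := hxxpos x hx0
    have hlow : ν m i * (x ⬝ᵥ x) ≤ x ⬝ᵥ (A m).mulVec x := by
      rw [hxAx x, ← hPars x, Finset.mul_sum]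
      refine Finset.sum_le_sum fun l _ => ?_
      by_cases hl : i < l
      · rw [hxq l hl]
        simp
      · have hle : ν m i ≤ ν m l := hν_anti m (le_of_not_gt hl)
        nlinarith [sq_nonneg (x ⬝ᵥ e m l)]
    have hup : x ⬝ᵥ (A m).mulVec x ≤ (lam i * (1 + (d:ℝ) * (m:ℝ) * V^2)) * (x ⬝ᵥ x) := by
      rw [quad_form lam v (A m) hAab x]
      have hxxd : x ⬝ᵥ x = ∑ a, x a ^ 2 := by
        rw [dotProduct]
        exact Finset.sum_congr rfl fun a _ => (sq (x a)) ▸ rfl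
      have h1 : (∑ a, lam a * x a ^ 2) ≤ lam i * (x ⬝ᵥ x) := by
        rw [hxxd, Finset.mul_sum]
        refine Finset.sum_le_sum fun a _ => ?_
        by_cases hxa : x a = 0
        · simp [hxa]
        · have hai : i ≤ a := le_of_not_gt (fun h => hxa (hxp a h))
          have := hlam_anti hai
          nlinarith [sq_nonneg (x a)]
      have h2 : ∀ k, (∑ a, v k a * (Real.sqrt (lam a) * x a))^2
          ≤ (d:ℝ) * V^2 * lam i * (x ⬝ᵥ x) := by
        intro k
        have habs : |∑ a, v k a * (Real.sqrt (lam a) * x a)|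
            ≤ V * Real.sqrt (lam i) * ∑ a, |x a| := by
          calc |∑ a, v k a * (Real.sqrt (lam a) * x a)|
              ≤ ∑ a, |v k a * (Real.sqrt (lam a) * x a)| := Finset.abs_sum_le_sum_abs _ _
            _ ≤ ∑ a, V * Real.sqrt (lam i) * |x a| := by
                refine Finset.sum_le_sum fun a _ => ?_
                by_cases hxa : x a = 0
                · simp [hxa]
                · have hai : i ≤ a := le_of_not_gt (fun h => hxa (hxp a h))
                  have hlle : lam a ≤ lam i := hlam_anti hai
                  have hsle : Real.sqrt (lam a) ≤ Real.sqrt (lam i) := Real.sqrt_le_sqrt hlle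
                  rw [abs_mul, abs_mul, abs_of_nonneg (Real.sqrt_nonneg (lam a))]
                  have habsx : (0:ℝ) ≤ |x a| := abs_nonneg _
                  have t1 : Real.sqrt (lam a) * |x a| ≤ Real.sqrt (lam i) * |x a| :=
                    mul_le_mul_of_nonneg_right hsle habsx
                  have t2 : |v k a| * (Real.sqrt (lam a) * |x a|)
                      ≤ V * (Real.sqrt (lam i) * |x a|) :=
                    mul_le_mul (hv k a) t1 (by positivity) hV0.le
                  calc |v k a| * (Real.sqrt (lam a) * |x a|)
                      ≤ V * (Real.sqrt (lam i) * |x a|) := t2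
                    _ = V * Real.sqrt (lam i) * |x a| := by ring
            _ = V * Real.sqrt (lam i) * ∑ a, |x a| := by rw [Finset.mul_sum]
        have hcs : (∑ a, |x a|)^2 ≤ (d:ℝ) * (x ⬝ᵥ x) := by
          have h0 := Finset.sum_mul_sq_le_sq_mul_sq Finset.univ (fun _ : Fin d => (1:ℝ))
            (fun a => |x a|)
          simp only [one_mul, one_pow, sq_abs] at h0
          rw [Finset.sum_const, Finset.card_univ, Fintype.card_fin, nsmul_eq_mul, mul_one] at h0
          rw [dotProduct,
            show (∑ a, x a * x a) = ∑ a, x a ^ 2 from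
              Finset.sum_congr rfl (fun a _ => (sq (x a)).symm)]
          exact h0
        have hb0 : (0:ℝ) ≤ V * Real.sqrt (lam i) * ∑ a, |x a| :=
          mul_nonneg (mul_nonneg hV0.le (Real.sqrt_nonneg _))
            (Finset.sum_nonneg fun a _ => abs_nonneg _)
        have hsq : (∑ a, v k a * (Real.sqrt (lam a) * x a))^2
            ≤ (V * Real.sqrt (lam i) * ∑ a, |x a|)^2 := by
          rw [← sq_abs]
          exact pow_le_pow_left₀ (abs_nonneg _) habs 2
        have hexp : (V * Real.sqrt (lam i) * ∑ a, |x a|)^2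
            = V^2 * lam i * (∑ a, |x a|)^2 := by
          rw [mul_pow, mul_pow, Real.sq_sqrt (hlam_pos i).le]
        rw [hexp] at hsq
        calc (∑ a, v k a * (Real.sqrt (lam a) * x a))^2
            ≤ V^2 * lam i * (∑ a, |x a|)^2 := hsq
          _ ≤ V^2 * lam i * ((d:ℝ) * (x ⬝ᵥ x)) :=
              mul_le_mul_of_nonneg_left hcs
                (mul_nonneg (sq_nonneg V) (hlam_pos i).le)
          _ = (d:ℝ) * V^2 * lam i * (x ⬝ᵥ x) := by ring
      calc (∑ a, lam a * x a ^ 2) + ∑ k ∈ Finset.range m, (∑ a, v k a * (Real.sqrt (lam a) * x a))^2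
          ≤ lam i * (x ⬝ᵥ x) + ∑ k ∈ Finset.range m, (d:ℝ) * V^2 * lam i * (x ⬝ᵥ x) :=
            add_le_add h1 (Finset.sum_le_sum fun k _ => h2 k)
        _ = lam i * (x ⬝ᵥ x) + (m:ℝ) * ((d:ℝ) * V^2 * lam i * (x ⬝ᵥ x)) := by
            rw [Finset.sum_const, Finset.card_range, nsmul_eq_mul]
        _ = (lam i * (1 + (d:ℝ) * (m:ℝ) * V^2)) * (x ⬝ᵥ x) := by ring
    exact le_of_mul_le_mul_right (le_trans hlow hup) hxx
  -- spectral value and perturbation bounds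
  have hνsum : ν m i = (∑ a, lam a * e m i a ^ 2)
      + ∑ k ∈ Finset.range m, (∑ b, v k b * (Real.sqrt (lam b) * e m i b))^2 := by
    rw [hνval i, quad_form lam v (A m) hAab]
  have hDle : (∑ a, lam a * e m i a ^ 2) ≤ ν m i := by
    rw [hνsum]
    exact le_add_of_nonneg_right (Finset.sum_nonneg fun k _ => sq_nonneg _)
  have hν0 : 0 < ν m i := lt_of_lt_of_le (hlam_pos i) hF1
  have hs2 : ∀ k : ℕ, (∑ b, v k b * (Real.sqrt (lam b) * e m i b))^2
      ≤ (d:ℝ) * V^2 * ν m i := by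
    intro k
    have hcs := Finset.sum_mul_sq_le_sq_mul_sq Finset.univ (v k)
      (fun b => Real.sqrt (lam b) * e m i b)
    have h1 : (∑ b, (v k b)^2) ≤ (d:ℝ) * V^2 := by
      calc (∑ b, (v k b)^2) ≤ ∑ _b : Fin d, V^2 := by
            refine Finset.sum_le_sum fun b _ => ?_
            rw [← sq_abs]
            exact pow_le_pow_left₀ (abs_nonneg _) (hv k b) 2
        _ = (d:ℝ) * V^2 := by
            rw [Finset.sum_const, Finset.card_univ, Fintype.card_fin, nsmul_eq_mul]
    have h2 : (∑ b, (Real.sqrt (lam b) * e m i b)^2) ≤ ν m i := by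
      refine le_trans (le_of_eq ?_) hDle
      refine Finset.sum_congr rfl fun b _ => ?_
      rw [mul_pow, Real.sq_sqrt (hlam_pos b).le]
    calc (∑ b, v k b * (Real.sqrt (lam b) * e m i b))^2
        ≤ (∑ b, (v k b)^2) * ∑ b, (Real.sqrt (lam b) * e m i b)^2 := hcs
      _ ≤ ((d:ℝ) * V^2) * ν m i := by
          apply mul_le_mul h1 h2 (Finset.sum_nonneg fun b _ => sq_nonneg _)
          positivity
      _ = (d:ℝ) * V^2 * ν m i := by ring
  obtain ⟨w, hwdef⟩ : ∃ w : ℝ,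
      w = ∑ k ∈ Finset.range m, v k j * ∑ b, v k b * (Real.sqrt (lam b) * e m i b) := ⟨_, rfl⟩
  have hw2 : w^2 ≤ ((m:ℝ) * V^2 * Real.sqrt d)^2 * ν m i := by
    have hSB : (0:ℝ) ≤ (d:ℝ) * V^2 * ν m i := by positivity
    have habs : |w| ≤ (m:ℝ) * (V * Real.sqrt ((d:ℝ) * V^2 * ν m i)) := by
      rw [hwdef]
      calc |∑ k ∈ Finset.range m, v k j * ∑ b, v k b * (Real.sqrt (lam b) * e m i b)|
          ≤ ∑ k ∈ Finset.range m, |v k j * ∑ b, v k b * (Real.sqrt (lam b) * e m i b)| :=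
            Finset.abs_sum_le_sum_abs _ _
        _ ≤ ∑ _k ∈ Finset.range m, V * Real.sqrt ((d:ℝ) * V^2 * ν m i) := by
            refine Finset.sum_le_sum fun k _ => ?_
            rw [abs_mul]
            have hs : |∑ b, v k b * (Real.sqrt (lam b) * e m i b)|
                ≤ Real.sqrt ((d:ℝ) * V^2 * ν m i) := by
              rw [← Real.sqrt_sq_eq_abs]
              exact Real.sqrt_le_sqrt (hs2 k)
            exact mul_le_mul (hv k j) hs (abs_nonneg _) hV0.le
        _ = (m:ℝ) * (V * Real.sqrt ((d:ℝ) * V^2 * ν m i)) := by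
            rw [Finset.sum_const, Finset.card_range, nsmul_eq_mul]
    have h1 : w^2 ≤ ((m:ℝ) * (V * Real.sqrt ((d:ℝ) * V^2 * ν m i)))^2 := by
      rw [← sq_abs]
      refine pow_le_pow_left₀ (abs_nonneg _) habs 2
    have h2 : ((m:ℝ) * (V * Real.sqrt ((d:ℝ) * V^2 * ν m i)))^2
        = ((m:ℝ) * V^2 * Real.sqrt d)^2 * ν m i := by
      rw [mul_pow, mul_pow, Real.sq_sqrt hSB, mul_pow, mul_pow, Real.sq_sqrt hd0.le]
      ring
    rw [h2] at h1
    exact h1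
  have hEqn : (ν m i - lam j) * e m i j = Real.sqrt (lam j) * w := by
    have h0 := congrFun (he_eig m i) j
    rw [mulVec_coord lam v (A m) hAab (e m i) j] at h0
    simp only [Pi.smul_apply, smul_eq_mul] at h0
    rw [hwdef, sub_mul]
    linarith only [h0]
  have hE2 : (e m i j)^2 ≤ 1 := by
    have h0 := he_orth m i i
    rw [if_pos rfl, dotProduct] at h0
    have h1 : (e m i j) * (e m i j) ≤ ∑ a, e m i a * e m i a :=
      Finset.single_le_sum (f := fun a => e m i a * e m i a)
        (fun a _ => mul_self_nonneg _) (Finset.mem_univ j)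
    rw [h0] at h1
    rw [sq]
    exact h1
  have ha := hlam_pos i
  have hb := hlam_pos j
  rcases Nat.eq_zero_or_pos m with hm0 | hm1
  · -- m = 0 : A is diagonal
    subst hm0
    have hw0 : w = 0 := by rw [hwdef]; simp
    have hνeq : ν 0 i = lam i := le_antisymm (by simpa using hF2) hF1
    by_cases hlj : lam j = lam i
    · rw [hC0, hlj]
      simp only [min_self, max_self]
      rw [div_self (hlam_pos i).ne', Real.sqrt_one, one_mul]
      rw [← Real.sqrt_one, ← Real.sqrt_sq_eq_abs]
      exact Real.sqrt_le_sqrt hE2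
    · have hprod : (ν 0 i - lam j) * e 0 i j = 0 := by rw [hEqn, hw0, mul_zero]
      have he0 : e 0 i j = 0 := by
        rcases mul_eq_zero.mp hprod with h | h
        · exact absurd (by linarith only [h, hνeq] : lam j = lam i) hlj
        · exact h
      rw [he0, abs_zero, hC0, one_mul]
      exact Real.sqrt_nonneg _
  · -- m ≥ 1
    have hCf := Cfacts (d:ℝ) V hd1 hu hV0 C hC0 hCrec
    have hMK : max (2 * (m:ℝ) * V^2 * Real.sqrt d) (Real.sqrt 2) *
        Real.sqrt (1 + (d:ℝ) * (m:ℝ) * V^2) ≤ C m := (hCf m).2 hm1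
    set M := max (2 * (m:ℝ) * V^2 * Real.sqrt d) (Real.sqrt 2) with hMdef
    set K := 1 + (d:ℝ) * (m:ℝ) * V^2 with hKdef
    have hdm0 : (0:ℝ) ≤ (d:ℝ) * (m:ℝ) * V^2 := by positivity
    have hK1 : 1 ≤ K := by rw [hKdef]; linarith
    have hK0 : 0 ≤ K := by linarith
    have hMs2 : Real.sqrt 2 ≤ M := le_max_right _ _
    have hM0 : (0:ℝ) ≤ M := le_trans (Real.sqrt_nonneg 2) hMs2
    have hM2 : 2 ≤ M^2 := by
      have h0 := pow_le_pow_left₀ (Real.sqrt_nonneg 2) hMs2 2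
      rwa [Real.sq_sqrt (by norm_num : (0:ℝ) ≤ 2)] at h0
    set P := (m:ℝ) * V^2 * Real.sqrt d with hPdef
    have hP0 : (0:ℝ) ≤ P := by rw [hPdef]; positivity
    have h2P : 2 * P ≤ M := by
      have h0 : 2 * P = 2 * (m:ℝ) * V^2 * Real.sqrt d := by rw [hPdef]; ring
      rw [h0, hMdef]
      exact le_max_left _ _
    have h4P : 4 * P^2 ≤ M^2 := by
      have h0 := mul_self_le_mul_self (by linarith only [hP0] : (0:ℝ) ≤ 2*P) h2P
      nlinarith only [h0]
    have hP2M : P^2 ≤ M^2 := by linarith only [h4P, sq_nonneg P]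
    have hνK : ν m i ≤ lam i * K := hF2
    have hsqw : (e m i j)^2 * (ν m i - lam j)^2 = lam j * w^2 := by
      have h0 := congrArg (fun t : ℝ => t^2) hEqn
      simp only [mul_pow] at h0
      rw [Real.sq_sqrt hb.le] at h0
      linear_combination h0
    have hwP : lam j * w^2 ≤ lam j * (P^2 * ν m i) :=
      mul_le_mul_of_nonneg_left hw2 hb.le
    have hkey : (e m i j)^2 ≤ M^2 * K * (min (lam i) (lam j) / max (lam i) (lam j)) := by
      rcases le_or_gt (2 * lam j) (ν m i) with h1 | h1
      · -- ν ≥ 2 λⱼ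
        have hq : (e m i j)^2 * ν m i ≤ 4 * (lam j * P^2) := by
          have e1 : (ν m i)^2 ≤ 4 * (ν m i - lam j)^2 := by
            nlinarith only [mul_nonneg (by linarith only [h1] : (0:ℝ) ≤ ν m i - 2*lam j)
              (by linarith only [h1, hb] : (0:ℝ) ≤ 3*ν m i - 2*lam j)]
          have e2 : (e m i j)^2 * (ν m i)^2 ≤ 4 * ((e m i j)^2 * (ν m i - lam j)^2) := by
            nlinarith only [mul_le_mul_of_nonneg_left e1 (sq_nonneg (e m i j))]
          have hq2 : ((e m i j)^2 * ν m i) * ν m i ≤ (4 * (lam j * P^2)) * ν m i := by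
            nlinarith only [hsqw, hwP, e2]
          exact le_of_mul_le_mul_right hq2 hν0
        rcases le_total (lam j) (lam i) with hba | hab
        · rw [min_eq_right hba, max_eq_left hba,
            show M^2*K*(lam j / lam i) = M^2*K*lam j/lam i by ring, le_div_iff₀ ha]
          have p1 : (e m i j)^2 * lam i ≤ (e m i j)^2 * ν m i :=
            mul_le_mul_of_nonneg_left hF1 (sq_nonneg _)
          have p2 : 4 * P^2 * lam j ≤ M^2 * lam j :=
            mul_le_mul_of_nonneg_right h4P hb.le
          have p3 : M^2 * lam j ≤ M^2 * K * lam j := by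
            nlinarith only [mul_nonneg (mul_nonneg (sq_nonneg M) hb.le)
              (by linarith only [hK1] : (0:ℝ) ≤ K - 1)]
          nlinarith only [p1, hq, p2, p3]
        · rw [min_eq_left hab, max_eq_right hab,
            show M^2*K*(lam i / lam j) = M^2*K*lam i/lam j by ring, le_div_iff₀ hb]
          have u1 : ((e m i j)^2 * ν m i) * lam j ≤ (4 * (lam j * P^2)) * lam j :=
            mul_le_mul_of_nonneg_right hq hb.le
          have u2 : 2 * lam j ≤ lam i * K := le_trans h1 hνK
          have u3 : (2*lam j)*(2*lam j) ≤ (ν m i)*(lam i*K) :=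
            mul_le_mul h1 u2 (by linarith only [hb]) hν0.le
          have u4 : P^2 * ((2*lam j)*(2*lam j)) ≤ P^2 * ((ν m i)*(lam i*K)) :=
            mul_le_mul_of_nonneg_left u3 (sq_nonneg P)
          have t1 : ((e m i j)^2 * lam j) * ν m i ≤ (P^2 * lam i * K) * ν m i := by
            nlinarith only [u1, u4]
          have t2 : (e m i j)^2 * lam j ≤ P^2 * lam i * K :=
            le_of_mul_le_mul_right t1 hν0
          have t3 : P^2 * (lam i * K) ≤ M^2 * (lam i * K) :=
            mul_le_mul_of_nonneg_right hP2M (mul_nonneg ha.le hK0)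
          nlinarith only [t2, t3]
      · rcases le_or_gt (2 * ν m i) (lam j) with h2 | h2
        · -- λⱼ ≥ 2 ν
          have hab : lam i ≤ lam j := by linarith only [hF1, h2, hν0]
          rw [min_eq_left hab, max_eq_right hab,
            show M^2*K*(lam i / lam j) = M^2*K*lam i/lam j by ring, le_div_iff₀ hb]
          have e0 : (lam j)^2 ≤ 4 * (ν m i - lam j)^2 := by
            nlinarith only [mul_nonneg (by linarith only [h2] : (0:ℝ) ≤ lam j - 2*ν m i)
              (by linarith only [h2, hν0] : (0:ℝ) ≤ 3*lam j - 2*ν m i)]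
          have e1 : ((e m i j)^2 * lam j) * lam j ≤ (4 * (P^2 * ν m i)) * lam j := by
            nlinarith only [mul_le_mul_of_nonneg_left e0 (sq_nonneg (e m i j)), hsqw, hwP]
          have e2 : (e m i j)^2 * lam j ≤ 4 * (P^2 * ν m i) :=
            le_of_mul_le_mul_right e1 hb
          have e3 : 4 * P^2 * ν m i ≤ 4 * P^2 * (lam i * K) :=
            mul_le_mul_of_nonneg_left hνK (by nlinarith only [sq_nonneg P])
          have e4 : 4 * P^2 * (lam i * K) ≤ M^2 * (lam i * K) :=
            mul_le_mul_of_nonneg_right h4P (mul_nonneg ha.le hK0)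
          nlinarith only [e2, e3, e4]
        · -- ν/2 < λⱼ < 2ν
          rcases le_total (lam j) (lam i) with hba | hab
          · rw [min_eq_right hba, max_eq_left hba,
              show M^2*K*(lam j / lam i) = M^2*K*lam j/lam i by ring, le_div_iff₀ ha]
            have p1 : (e m i j)^2 * lam i ≤ lam i :=
              by nlinarith only [mul_le_mul_of_nonneg_right hE2 ha.le]
            have p2 : 2 * lam j ≤ M^2 * K * lam j := by
              nlinarith only [mul_le_mul_of_nonneg_right
                (show (2:ℝ) ≤ M^2 * K by nlinarith only [hM2, hK1, sq_nonneg M]) hb.le]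
            linarith only [hF1, h1, p1, p2]
          · rw [min_eq_left hab, max_eq_right hab,
              show M^2*K*(lam i / lam j) = M^2*K*lam i/lam j by ring, le_div_iff₀ hb]
            have p1 : (e m i j)^2 * lam j ≤ lam j :=
              by nlinarith only [mul_le_mul_of_nonneg_right hE2 hb.le]
            have p2 : 2 * (lam i * K) ≤ M^2 * (lam i * K) := by
              nlinarith only [mul_le_mul_of_nonneg_right hM2 (mul_nonneg ha.le hK0)]
            nlinarith only [p1, h2, hνK, p2]
    have habs : |e m i j| ≤
        Real.sqrt (M^2 * K * (min (lam i) (lam j) / max (lam i) (lam j))) := by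
      rw [← Real.sqrt_sq_eq_abs]
      exact Real.sqrt_le_sqrt hkey
    have hsp : Real.sqrt (M^2 * K * (min (lam i) (lam j) / max (lam i) (lam j)))
        = (M * Real.sqrt K) * Real.sqrt (min (lam i) (lam j) / max (lam i) (lam j)) := by
      rw [Real.sqrt_mul (by nlinarith only [sq_nonneg M, hK0] : (0:ℝ) ≤ M^2 * K),
        Real.sqrt_mul (sq_nonneg M), Real.sqrt_sq hM0]
    rw [hsp] at habs
    exact le_trans habs (mul_le_mul_of_nonneg_right hMK (Real.sqrt_nonneg _))
end

section
/- Let D = diag(λ₁,…,λ_d) with λ₁ ≥ … ≥ λ_d > 0, let v ∈ ℝ^d and set V = max(d^{-1/2}, ‖v‖_∞). Let A = D + √D v vᵀ √D, let ν₁ ≥ … ≥ ν_d be the eigenvalues of A and (e₁^{(1)},…,e_d^{(1)}) a corresponding orthonormal basis of eigenvectors. Then |[e_i^{(1)}]_j| ≤ 5 d² V⁴ · √(min(λ_i,λ_j)/max(λ_i,λ_j)) for all i,j ∈ {1,…,d}. -/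
open Matrix Finset

/-- The sup norm `‖v‖_∞ = max_j |[v]_j|` of a vector `v ∈ ℝ^d`, `d > 0`. -/
noncomputable def supNorm {d : ℕ} (hd : 0 < d) (v : Fin d → ℝ) : ℝ :=
  Finset.univ.sup' (Finset.univ_nonempty_iff.mpr (Fin.pos_iff_nonempty.mp hd))
    fun j => |v j|

lemma aux_ker {α β : Type} [Fintype α] [Fintype β]
    (h : Fintype.card β < Fintype.card α) (f : (α → ℝ) →ₗ[ℝ] (β → ℝ)) :
    ∃ b : α → ℝ, b ≠ 0 ∧ f b = 0 := by
  by_contra hc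
  push_neg at hc
  have hinj : Function.Injective f := by
    rw [← LinearMap.ker_eq_bot, Submodule.eq_bot_iff]
    intro x hx
    by_contra hx0
    exact hc x hx0 hx
  have := LinearMap.finrank_le_finrank_of_injective hinj
  rw [Module.finrank_pi, Module.finrank_pi] at this
  omega

lemma combo_exists {d : ℕ} (e : Fin d → Fin d → ℝ)
    (P Q : Fin d → Prop) [DecidablePred P] [DecidablePred Q]
    (h : Fintype.card {l // Q l} < Fintype.card {k // P k}) :
    ∃ a : Fin d → ℝ, a ≠ 0 ∧ (∀ k, ¬ P k → a k = 0) ∧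
      ∀ l, Q l → (∑ k, a k * e k l) = 0 := by
  let f : ({k // P k} → ℝ) →ₗ[ℝ] ({l // Q l} → ℝ) :=
    { toFun := fun b l => ∑ k : {k // P k}, b k * e k.1 l.1
      map_add' := by
        intro b1 b2; funext l
        simp [add_mul, Finset.sum_add_distrib]
      map_smul' := by
        intro r b; funext l
        simp [Finset.mul_sum, mul_assoc] }
  obtain ⟨b, hb0, hfb⟩ := aux_ker h f
  have hsum : ∀ l : Fin d,
      (∑ k : Fin d, (if h : P k then b ⟨k, h⟩ else 0) * e k l)
        = ∑ k : {k // P k}, b k * e k.1 l := by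
    intro l
    rw [← Finset.sum_filter_add_sum_filter_not univ P
      (fun k => (if h : P k then b ⟨k, h⟩ else 0) * e k l)]
    have hz : ∑ k ∈ univ.filter (fun k => ¬ P k),
        (if h : P k then b ⟨k, h⟩ else 0) * e k l = 0 := by
      apply Finset.sum_eq_zero
      intro k hk
      simp only [Finset.mem_filter] at hk
      simp [hk.2]
    have hmem : ∀ x : Fin d, x ∈ univ.filter P ↔ P x := by simp
    rw [hz, add_zero,
      Finset.sum_subtype (univ.filter P) hmem
        (fun k => (if h : P k then b ⟨k, h⟩ else 0) * e k l)]
    exact Finset.sum_congr rfl fun k _ => by rw [dif_pos k.2]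
  refine ⟨fun k => if h : P k then b ⟨k, h⟩ else 0, ?_, ?_, ?_⟩
  · intro hcong
    apply hb0
    funext k
    have := congrFun hcong k.1
    simpa [k.2] using this
  · intro k hk; simp [hk]
  · intro l hl
    have := congrFun hfb ⟨l, hl⟩
    simp only [f, LinearMap.coe_mk, AddHom.coe_mk, Pi.zero_apply] at this
    rw [hsum l, this]

lemma hAx_lemma {d : ℕ} (lam v : Fin d → ℝ)
    (A : Matrix (Fin d) (Fin d) ℝ)
    (hA : A = Matrix.diagonal lam +
      (Matrix.diagonal fun i => Real.sqrt (lam i)) * Matrix.vecMulVec v v *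
      (Matrix.diagonal fun i => Real.sqrt (lam i)))
    (x : Fin d → ℝ) (l : Fin d) :
    (A *ᵥ x) l = lam l * x l +
      Real.sqrt (lam l) * v l * (∑ k, Real.sqrt (lam k) * v k * x k) := by
  subst hA
  rw [Matrix.add_mulVec, Pi.add_apply, Matrix.mulVec_diagonal,
    ← Matrix.mulVec_mulVec, ← Matrix.mulVec_mulVec, Matrix.mulVec_diagonal]
  congr 1
  have : (Matrix.vecMulVec v v *ᵥ ((Matrix.diagonal fun i => Real.sqrt (lam i)) *ᵥ x)) l
      = v l * ∑ k, Real.sqrt (lam k) * v k * x k := by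
    rw [Matrix.mulVec, dotProduct, Finset.mul_sum]
    apply Finset.sum_congr rfl
    intro k _
    rw [Matrix.vecMulVec_apply, Matrix.mulVec_diagonal]
    ring
  rw [this]; ring

lemma combo_dot {d : ℕ} (e : Fin d → Fin d → ℝ)
    (he_orth : ∀ i j, e i ⬝ᵥ e j = if i = j then (1 : ℝ) else 0)
    (a b : Fin d → ℝ) :
    ∑ l, (∑ k, a k * e k l) * (∑ k, b k * e k l) = ∑ k, a k * b k := by
  have h1 : ∀ l : Fin d, (∑ k, a k * e k l) * (∑ k, b k * e k l)
      = ∑ k, ∑ m, (a k * b m) * (e k l * e m l) := by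
    intro l; rw [Finset.sum_mul_sum]; apply Finset.sum_congr rfl; intros
    apply Finset.sum_congr rfl; intros; ring
  simp_rw [h1]
  rw [Finset.sum_comm]
  have h2 : ∀ k : Fin d, ∑ l, ∑ m, (a k * b m) * (e k l * e m l)
      = ∑ m, (a k * b m) * (e k ⬝ᵥ e m) := by
    intro k
    rw [Finset.sum_comm]
    apply Finset.sum_congr rfl
    intro m _
    rw [dotProduct, Finset.mul_sum]
  simp_rw [h2, he_orth, mul_ite, mul_one, mul_zero, Finset.sum_ite_eq]
  simp

lemma quadA {d : ℕ} (lam v : Fin d → ℝ)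
    (A : Matrix (Fin d) (Fin d) ℝ)
    (hA : A = Matrix.diagonal lam +
      (Matrix.diagonal fun i => Real.sqrt (lam i)) * Matrix.vecMulVec v v *
      (Matrix.diagonal fun i => Real.sqrt (lam i)))
    (x : Fin d → ℝ) :
    ∑ l, x l * (A *ᵥ x) l
      = (∑ l, lam l * (x l)^2) + (∑ l, Real.sqrt (lam l) * v l * x l)^2 := by
  have h1 : ∀ l, x l * (A *ᵥ x) l = lam l * (x l)^2
      + (Real.sqrt (lam l) * v l * x l) * (∑ k, Real.sqrt (lam k) * v k * x k) := by
    intro l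
    rw [hAx_lemma lam v A hA x l]
    ring
  simp_rw [h1]
  rw [Finset.sum_add_distrib, ← Finset.sum_mul, pow_two]

lemma quadE {d : ℕ} (A : Matrix (Fin d) (Fin d) ℝ) (ν : Fin d → ℝ)
    (e : Fin d → Fin d → ℝ)
    (he_orth : ∀ i j, e i ⬝ᵥ e j = if i = j then (1 : ℝ) else 0)
    (he_eig : ∀ i, A.mulVec (e i) = ν i • e i)
    (a : Fin d → ℝ) :
    ∑ l, (∑ k, a k * e k l) * (A *ᵥ (fun l => ∑ k, a k * e k l)) l
      = ∑ k, ν k * (a k) * (a k) := by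
  have hAe : ∀ l, (A *ᵥ (fun l => ∑ k, a k * e k l)) l
      = ∑ k, (a k * ν k) * e k l := by
    intro l
    rw [Matrix.mulVec, dotProduct]
    have h : ∀ m, A l m * (∑ k, a k * e k m) = ∑ k, a k * (A l m * e k m) := by
      intro m; rw [Finset.mul_sum]; apply Finset.sum_congr rfl; intros; ring
    simp_rw [h]
    rw [Finset.sum_comm]
    apply Finset.sum_congr rfl
    intro k _
    rw [← Finset.mul_sum]
    have h2 : ∑ m, A l m * e k m = (A *ᵥ e k) l := rfl
    rw [h2, he_eig k, Pi.smul_apply, smul_eq_mul]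
    ring
  simp_rw [hAe]
  rw [combo_dot e he_orth a (fun k => a k * ν k)]
  apply Finset.sum_congr rfl; intros; ring

lemma spectral_bound {d : ℕ}
    (lam : Fin d → ℝ) (hlam_anti : Antitone lam) (hlam_pos : ∀ i, 0 < lam i)
    (v : Fin d → ℝ)
    (A : Matrix (Fin d) (Fin d) ℝ)
    (hA : A = Matrix.diagonal lam +
      (Matrix.diagonal fun i => Real.sqrt (lam i)) * Matrix.vecMulVec v v *
      (Matrix.diagonal fun i => Real.sqrt (lam i)))
    (ν : Fin d → ℝ) (hν_anti : Antitone ν)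
    (e : Fin d → Fin d → ℝ)
    (he_orth : ∀ i j, e i ⬝ᵥ e j = if i = j then (1 : ℝ) else 0)
    (he_eig : ∀ i, A.mulVec (e i) = ν i • e i)
    (i : Fin d) :
    lam i ≤ ν i ∧ ν i ≤ lam i * (1 + ∑ k, (v k)^2) := by
  classical
  constructor
  · -- lower bound
    have hcard : Fintype.card {l : Fin d // i < l} < Fintype.card {k : Fin d // i ≤ k} := by
      have h1 : Fintype.card {k : Fin d // i ≤ k} = d - i := by
        rw [Fintype.card_subtype]
        have : Finset.filter (i ≤ ·) univ = Finset.Ici i := by ext k; simp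
        rw [this, Fin.card_Ici]
      have h2 : Fintype.card {l : Fin d // i < l} = d - 1 - i := by
        rw [Fintype.card_subtype]
        have : Finset.filter (i < ·) univ = Finset.Ioi i := by ext k; simp
        rw [this, Fin.card_Ioi]
      have := i.isLt
      omega
    obtain ⟨a, ha0, hsupp, hvan⟩ := combo_exists e (fun k => i ≤ k) (fun l => i < l) hcard
    set x : Fin d → ℝ := fun l => ∑ k, a k * e k l with hxdef
    have hxx : ∑ l, x l * x l = ∑ k, a k * a k := combo_dot e he_orth a a
    have hS : (0:ℝ) < ∑ k, a k * a k := by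
      rcases Function.ne_iff.mp ha0 with ⟨k0, hk0⟩
      have hk0' : a k0 ≠ 0 := by simpa using hk0
      have : (0:ℝ) < a k0 * a k0 := mul_self_pos.mpr hk0'
      have hle : a k0 * a k0 ≤ ∑ k, a k * a k :=
        Finset.single_le_sum (f := fun k => a k * a k)
          (fun k _ => mul_self_nonneg (a k)) (Finset.mem_univ k0)
      linarith
    have h1 : ∑ l, x l * (A *ᵥ x) l = ∑ k, ν k * a k * a k :=
      quadE A ν e he_orth he_eig a
    have h2 : ∑ l, x l * (A *ᵥ x) l
        = (∑ l, lam l * (x l)^2) + (∑ l, Real.sqrt (lam l) * v l * x l)^2 :=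
      quadA lam v A hA x
    have h3 : ∑ k, ν k * a k * a k ≤ ν i * ∑ k, a k * a k := by
      rw [Finset.mul_sum]
      apply Finset.sum_le_sum
      intro k _
      by_cases hk : i ≤ k
      · have := hν_anti hk
        nlinarith [mul_self_nonneg (a k)]
      · rw [hsupp k hk]; simp
    have h4 : lam i * ∑ k, a k * a k ≤ ∑ l, lam l * (x l)^2 := by
      rw [← hxx, Finset.mul_sum]
      apply Finset.sum_le_sum
      intro l _
      by_cases hl : i < l
      · have hx0 : x l = 0 := hvan l hl
        rw [hx0]; simp
      · have := hlam_anti (le_of_not_gt hl)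
        nlinarith [mul_self_nonneg (x l)]
    have h9 : lam i * (∑ k, a k * a k) ≤ ν i * (∑ k, a k * a k) := by
      nlinarith [sq_nonneg (∑ l, Real.sqrt (lam l) * v l * x l)]
    exact le_of_mul_le_mul_right h9 hS
  · -- upper bound
    have hcard : Fintype.card {l : Fin d // l < i} < Fintype.card {k : Fin d // k ≤ i} := by
      have h1 : Fintype.card {k : Fin d // k ≤ i} = (i:ℕ) + 1 := by
        rw [Fintype.card_subtype]
        have : Finset.filter (· ≤ i) univ = Finset.Iic i := by ext k; simp
        rw [this, Fin.card_Iic]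
      have h2 : Fintype.card {l : Fin d // l < i} = (i:ℕ) := by
        rw [Fintype.card_subtype]
        have : Finset.filter (· < i) univ = Finset.Iio i := by ext k; simp
        rw [this, Fin.card_Iio]
      omega
    obtain ⟨a, ha0, hsupp, hvan⟩ := combo_exists e (fun k => k ≤ i) (fun l => l < i) hcard
    set x : Fin d → ℝ := fun l => ∑ k, a k * e k l with hxdef
    have hxx : ∑ l, x l * x l = ∑ k, a k * a k := combo_dot e he_orth a a
    have hS : (0:ℝ) < ∑ k, a k * a k := by
      rcases Function.ne_iff.mp ha0 with ⟨k0, hk0⟩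
      have hk0' : a k0 ≠ 0 := by simpa using hk0
      have : (0:ℝ) < a k0 * a k0 := mul_self_pos.mpr hk0'
      have hle : a k0 * a k0 ≤ ∑ k, a k * a k :=
        Finset.single_le_sum (f := fun k => a k * a k)
          (fun k _ => mul_self_nonneg (a k)) (Finset.mem_univ k0)
      linarith
    have h1 : ∑ l, x l * (A *ᵥ x) l = ∑ k, ν k * a k * a k :=
      quadE A ν e he_orth he_eig a
    have h2 : ∑ l, x l * (A *ᵥ x) l
        = (∑ l, lam l * (x l)^2) + (∑ l, Real.sqrt (lam l) * v l * x l)^2 :=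
      quadA lam v A hA x
    have h3 : ν i * ∑ k, a k * a k ≤ ∑ k, ν k * a k * a k := by
      rw [Finset.mul_sum]
      apply Finset.sum_le_sum
      intro k _
      by_cases hk : k ≤ i
      · have := hν_anti hk
        nlinarith [mul_self_nonneg (a k)]
      · rw [hsupp k hk]; simp
    have h4 : ∑ l, lam l * (x l)^2 ≤ lam i * ∑ k, a k * a k := by
      rw [← hxx, Finset.mul_sum]
      apply Finset.sum_le_sum
      intro l _
      by_cases hl : l < i
      · have hx0 : x l = 0 := hvan l hl
        rw [hx0]; simp
      · have := hlam_anti (le_of_not_gt hl)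
        nlinarith [mul_self_nonneg (x l)]
    have h5 : (∑ l, Real.sqrt (lam l) * v l * x l)^2
        ≤ (∑ l, (v l)^2) * (∑ l, lam l * (x l)^2) := by
      have hcs := Finset.sum_mul_sq_le_sq_mul_sq univ (fun l => v l)
        (fun l => Real.sqrt (lam l) * x l)
      have he1 : ∀ l : Fin d, v l * (Real.sqrt (lam l) * x l)
          = Real.sqrt (lam l) * v l * x l := by intro l; ring
      have he2 : ∀ l : Fin d, (Real.sqrt (lam l) * x l)^2 = lam l * (x l)^2 := by
        intro l
        rw [mul_pow, Real.sq_sqrt (le_of_lt (hlam_pos l))]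
      simp_rw [he1, he2] at hcs
      exact hcs
    have h6 : (0:ℝ) ≤ ∑ l, lam l * (x l)^2 := by
      apply Finset.sum_nonneg; intro l _
      exact mul_nonneg (le_of_lt (hlam_pos l)) (sq_nonneg _)
    have h7 : (0:ℝ) ≤ ∑ l, (v l)^2 := by
      apply Finset.sum_nonneg; intro l _; positivity
    have hlami := hlam_pos i
    have h8 : (∑ l, (v l)^2) * (∑ l, lam l * (x l)^2)
        ≤ (∑ l, (v l)^2) * (lam i * ∑ k, a k * a k) := by
      apply mul_le_mul_of_nonneg_left h4 h7
    have h9 : ν i * (∑ k, a k * a k)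
        ≤ (lam i * (1 + ∑ k, (v k)^2)) * (∑ k, a k * a k) := by
      nlinarith [h3, h1, h2, h5, h8]
    exact le_of_mul_le_mul_right h9 hS

set_option maxHeartbeats 1600000 in
/-- **Proposition 2 (rank-one perturbation).** -/
theorem eigenvector_bound_rank_one
    {d : ℕ} (hd : 0 < d)
    (lam : Fin d → ℝ) (hlam_anti : Antitone lam) (hlam_pos : ∀ i, 0 < lam i)
    (v : Fin d → ℝ)
    (V : ℝ) (hV : V = max (1 / Real.sqrt d) (supNorm hd v))
    (A : Matrix (Fin d) (Fin d) ℝ)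
    (hA : A = Matrix.diagonal lam +
      (Matrix.diagonal fun i => Real.sqrt (lam i)) * Matrix.vecMulVec v v *
      (Matrix.diagonal fun i => Real.sqrt (lam i)))
    (ν : Fin d → ℝ) (hν_anti : Antitone ν)
    (e : Fin d → Fin d → ℝ)
    (he_orth : ∀ i j, e i ⬝ᵥ e j = if i = j then (1 : ℝ) else 0)
    (he_eig : ∀ i, A.mulVec (e i) = ν i • e i) :
    ∀ i j : Fin d,
      |e i j| ≤ 5 * (d : ℝ) ^ 2 * V ^ 4 *
        Real.sqrt (min (lam i) (lam j) / max (lam i) (lam j)) := by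
  -- basic constants
  have hd0 : (0:ℝ) < d := by exact_mod_cast hd
  have hd1 : (1:ℝ) ≤ d := by exact_mod_cast hd
  have hVd : 1 / Real.sqrt d ≤ V := by rw [hV]; exact le_max_left _ _
  have hsd : 0 < Real.sqrt d := Real.sqrt_pos.mpr hd0
  have hVpos : 0 < V := lt_of_lt_of_le (by positivity) hVd
  have h1dV : 1 ≤ Real.sqrt d * V := by
    rw [mul_comm]; exact (div_le_iff₀ hsd).mp hVd
  have hdd : Real.sqrt d * Real.sqrt d = (d:ℝ) := Real.mul_self_sqrt hd0.le
  have hsd1 : 1 ≤ Real.sqrt d := by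
    nlinarith [hdd, hsd]
  have hdV2 : 1 ≤ (d:ℝ) * V^2 := by
    nlinarith [mul_le_mul h1dV h1dV zero_le_one (by positivity : (0:ℝ) ≤ Real.sqrt d * V), hdd]
  have hdV1 : 1 ≤ (d:ℝ) * V := by
    nlinarith [mul_le_mul hsd1 h1dV zero_le_one (le_of_lt hsd), hdd]
  have hdV2sq : 1 ≤ ((d:ℝ)*V^2)^2 := by nlinarith [hdV2]
  have hd4V8 : 1 ≤ (d:ℝ)^4*V^8 := by
    nlinarith [mul_le_mul hdV2sq hdV2sq zero_le_one (by positivity : (0:ℝ) ≤ ((d:ℝ)*V^2)^2)]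
  have hdV1sq : 1 ≤ ((d:ℝ)*V)^2 := by nlinarith [hdV1]
  have hd3V4 : 1 ≤ (d:ℝ)^3*V^4 := by
    nlinarith [mul_le_mul hdV1sq hdV2 zero_le_one (by positivity : (0:ℝ) ≤ ((d:ℝ)*V)^2)]
  have hd2V3 : 1 ≤ (d:ℝ)^2*V^3 := by
    nlinarith [mul_le_mul hdV1 hdV2 zero_le_one (by positivity : (0:ℝ) ≤ (d:ℝ)*V)]
  have hvV : ∀ k, |v k| ≤ V := by
    intro k
    rw [hV]
    exact le_trans (Finset.le_sup' (fun j => |v j|) (Finset.mem_univ k)) (le_max_right _ _)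
  -- eigen equation componentwise
  have heig : ∀ (i l : Fin d), lam l * e i l +
      Real.sqrt (lam l) * v l * (∑ k, Real.sqrt (lam k) * v k * e i k) = ν i * e i l := by
    intro i l
    have h := congrFun (he_eig i) l
    rw [hAx_lemma lam v A hA (e i) l] at h
    simpa [smul_eq_mul] using h
  have hnorm : ∀ i, ∑ l, e i l * e i l = 1 := by
    intro i
    have h := he_orth i i
    simpa [dotProduct] using h
  have hsum_sq : ∀ i, (∑ l, lam l * (e i l)^2)
      + (∑ k, Real.sqrt (lam k) * v k * e i k)^2 = ν i := by
    intro i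
    have h1 := quadA lam v A hA (e i)
    have h2 : ∑ l, e i l * (A *ᵥ e i) l = ν i := by
      rw [he_eig i]
      have h3 : ∀ l, e i l * (ν i • e i) l = ν i * (e i l * e i l) := by
        intro l; simp [smul_eq_mul]; ring
      simp_rw [h3]
      rw [← Finset.mul_sum, hnorm i, mul_one]
    rw [h1] at h2
    exact h2
  have hc2 : ∀ i, (∑ k, Real.sqrt (lam k) * v k * e i k)^2 ≤ ν i := by
    intro i
    have h := hsum_sq i
    have hnn : 0 ≤ ∑ l, lam l * (e i l)^2 :=
      Finset.sum_nonneg fun l _ => mul_nonneg (hlam_pos l).le (sq_nonneg _)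
    linarith
  have hν := fun i => spectral_bound lam hlam_anti hlam_pos v A hA ν hν_anti e he_orth he_eig i
  have hν_lo : ∀ i, lam i ≤ ν i := fun i => (hν i).1
  have hν_pos : ∀ i, 0 < ν i := fun i => lt_of_lt_of_le (hlam_pos i) (hν_lo i)
  have hv2 : ∑ k, (v k)^2 ≤ (d:ℝ) * V^2 := by
    calc ∑ k, (v k)^2 ≤ ∑ _k : Fin d, V^2 := by
          apply Finset.sum_le_sum
          intro k _
          nlinarith [hvV k, abs_nonneg (v k), sq_abs (v k)]
      _ = (d:ℝ) * V^2 := by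
          rw [Finset.sum_const, Finset.card_univ, Fintype.card_fin, nsmul_eq_mul]
  have hν_hi : ∀ i, ν i ≤ 2*((d:ℝ)*V^2)*lam i := by
    intro i
    have h := (hν i).2
    nlinarith [hlam_pos i, hv2, hdV2]
  have he1 : ∀ i j, |e i j| ≤ 1 := by
    intro i j
    have h := hnorm i
    have hle : e i j * e i j ≤ 1 := by
      have h2 : e i j * e i j ≤ ∑ l, e i l * e i l :=
        Finset.single_le_sum (f := fun l => e i l * e i l)
          (fun l _ => mul_self_nonneg _) (Finset.mem_univ j)
      linarith
    rw [abs_le]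
    constructor <;> nlinarith
  have hcabs : ∀ i, |∑ k, Real.sqrt (lam k) * v k * e i k| ≤ Real.sqrt (ν i) := by
    intro i
    rw [← Real.sqrt_sq_eq_abs]
    exact Real.sqrt_le_sqrt (hc2 i)
  intro i j
  have hsi : 0 < Real.sqrt (lam i) := Real.sqrt_pos.mpr (hlam_pos i)
  have hsj : 0 < Real.sqrt (lam j) := Real.sqrt_pos.mpr (hlam_pos j)
  rcases le_total (lam j) (lam i) with hji | hij
  · -- Case 1: lam j ≤ lam i
    rw [min_eq_right hji, max_eq_left hji]
    suffices hkey : |e i j| * Real.sqrt (lam i) ≤ (5*(d:ℝ)^2*V^4) * Real.sqrt (lam j) by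
      rw [Real.sqrt_div (hlam_pos j).le (lam i), ← mul_div_assoc, le_div_iff₀ hsi]
      exact hkey
    by_cases h25 : lam i ≤ 25*(d:ℝ)^4*V^8*lam j
    · -- trivial subcase
      have h1 : Real.sqrt (lam i) ≤ Real.sqrt (25*(d:ℝ)^4*V^8*lam j) := Real.sqrt_le_sqrt h25
      have h2 : Real.sqrt (25*(d:ℝ)^4*V^8*lam j) = (5*(d:ℝ)^2*V^4) * Real.sqrt (lam j) := by
        rw [show 25*(d:ℝ)^4*V^8*lam j = (5*(d:ℝ)^2*V^4)^2 * lam j by ring,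
          Real.sqrt_mul (by positivity) , Real.sqrt_sq (by positivity)]
      calc |e i j| * Real.sqrt (lam i)
          ≤ 1 * Real.sqrt (lam i) := mul_le_mul_of_nonneg_right (he1 i j) (Real.sqrt_nonneg _)
        _ = Real.sqrt (lam i) := one_mul _
        _ ≤ _ := by rw [← h2]; exact h1
    · push_neg at h25
      have h25ν : 25 * lam j < ν i := by
        have hh := mul_le_mul_of_nonneg_right hd4V8 (le_of_lt (hlam_pos j))
        nlinarith [hν_lo i]
      have heq : (ν i - lam j) * e i j
          = Real.sqrt (lam j) * v j * (∑ k, Real.sqrt (lam k) * v k * e i k) := by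
        linear_combination -(heig i j)
      have habs : (ν i - lam j) * |e i j|
          ≤ Real.sqrt (lam j) * V * Real.sqrt (ν i) := by
        have h1 : |(ν i - lam j) * e i j| = (ν i - lam j) * |e i j| := by
          rw [abs_mul, abs_of_nonneg (by linarith [hlam_pos j] : (0:ℝ) ≤ ν i - lam j)]
        rw [← h1, heq, abs_mul, abs_mul, abs_of_nonneg (Real.sqrt_nonneg (lam j))]
        apply mul_le_mul
        · exact mul_le_mul_of_nonneg_left (hvV j) (Real.sqrt_nonneg _)
        · exact hcabs i
        · exact abs_nonneg _
        · positivity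
      have h2425 : (24/25) * ν i ≤ ν i - lam j := by linarith
      have hsν : 0 < Real.sqrt (ν i) := Real.sqrt_pos.mpr (hν_pos i)
      have hνsq : Real.sqrt (ν i) * Real.sqrt (ν i) = ν i := Real.mul_self_sqrt (hν_pos i).le
      have hstep : (24/25) * Real.sqrt (ν i) * |e i j| ≤ Real.sqrt (lam j) * V := by
        have hh : (24/25) * Real.sqrt (ν i) * |e i j| * Real.sqrt (ν i)
            ≤ (Real.sqrt (lam j) * V) * Real.sqrt (ν i) := by
          have expand : (24/25) * Real.sqrt (ν i) * |e i j| * Real.sqrt (ν i)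
              = (24/25) * ν i * |e i j| := by
            linear_combination ((24/25) * |e i j|) * hνsq
          rw [expand]
          calc (24/25) * ν i * |e i j|
              ≤ (ν i - lam j) * |e i j| := mul_le_mul_of_nonneg_right h2425 (abs_nonneg _)
            _ ≤ Real.sqrt (lam j) * V * Real.sqrt (ν i) := habs
            _ = (Real.sqrt (lam j) * V) * Real.sqrt (ν i) := by ring
        exact le_of_mul_le_mul_right hh hsν
      have hsi_le : Real.sqrt (lam i) ≤ Real.sqrt (ν i) := Real.sqrt_le_sqrt (hν_lo i)
      have hVK : (25/24) * V ≤ 5*(d:ℝ)^2*V^4 := by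
        have hx := mul_le_mul_of_nonneg_right hd2V3 (le_of_lt hVpos)
        nlinarith [hx]
      calc |e i j| * Real.sqrt (lam i)
          ≤ |e i j| * Real.sqrt (ν i) := mul_le_mul_of_nonneg_left hsi_le (abs_nonneg _)
        _ ≤ (25/24) * (Real.sqrt (lam j) * V) := by linarith [hstep]
        _ ≤ (5*(d:ℝ)^2*V^4) * Real.sqrt (lam j) := by
            nlinarith [hVK, Real.sqrt_nonneg (lam j)]
  · -- Case 2: lam i ≤ lam j
    rw [min_eq_left hij, max_eq_right hij]
    suffices hkey : |e i j| * Real.sqrt (lam j) ≤ (5*(d:ℝ)^2*V^4) * Real.sqrt (lam i) by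
      rw [Real.sqrt_div (hlam_pos i).le (lam j), ← mul_div_assoc, le_div_iff₀ hsj]
      exact hkey
    by_cases h25 : lam j ≤ 25*(d:ℝ)^4*V^8*lam i
    · have h1 : Real.sqrt (lam j) ≤ Real.sqrt (25*(d:ℝ)^4*V^8*lam i) := Real.sqrt_le_sqrt h25
      have h2 : Real.sqrt (25*(d:ℝ)^4*V^8*lam i) = (5*(d:ℝ)^2*V^4) * Real.sqrt (lam i) := by
        rw [show 25*(d:ℝ)^4*V^8*lam i = (5*(d:ℝ)^2*V^4)^2 * lam i by ring,
          Real.sqrt_mul (by positivity) , Real.sqrt_sq (by positivity)]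
      calc |e i j| * Real.sqrt (lam j)
          ≤ 1 * Real.sqrt (lam j) := mul_le_mul_of_nonneg_right (he1 i j) (Real.sqrt_nonneg _)
        _ = Real.sqrt (lam j) := one_mul _
        _ ≤ _ := by rw [← h2]; exact h1
    · push_neg at h25
      have hd3V6 : 1 ≤ (d:ℝ)^3*V^6 := by
        nlinarith [mul_le_mul hdV2sq hdV2 zero_le_one (by positivity : (0:ℝ) ≤ ((d:ℝ)*V^2)^2)]
      have hνsmall : ν i ≤ (2/25) * lam j := by
        have h1 := hν_hi i
        have h2 := mul_le_mul_of_nonneg_right hd3V6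
          (mul_nonneg (mul_nonneg hd0.le (sq_nonneg V)) (hlam_pos i).le)
        nlinarith [h25, h2]
      have hgap : (23/25) * lam j ≤ lam j - ν i := by
        have := hν_pos i
        linarith
      have heq : (ν i - lam j) * e i j
          = Real.sqrt (lam j) * v j * (∑ k, Real.sqrt (lam k) * v k * e i k) := by
        linear_combination -(heig i j)
      have habs : (lam j - ν i) * |e i j|
          ≤ Real.sqrt (lam j) * V * Real.sqrt (ν i) := by
        have h1 : |(ν i - lam j) * e i j| = (lam j - ν i) * |e i j| := by
          rw [abs_mul, abs_of_nonpos (by linarith [hlam_pos j] : ν i - lam j ≤ 0)]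
          ring
        rw [← h1, heq, abs_mul, abs_mul, abs_of_nonneg (Real.sqrt_nonneg (lam j))]
        apply mul_le_mul
        · exact mul_le_mul_of_nonneg_left (hvV j) (Real.sqrt_nonneg _)
        · exact hcabs i
        · exact abs_nonneg _
        · positivity
      have hsjsq : Real.sqrt (lam j) * Real.sqrt (lam j) = lam j :=
        Real.mul_self_sqrt (hlam_pos j).le
      have hstep : (23/25) * Real.sqrt (lam j) * |e i j| ≤ V * Real.sqrt (ν i) := by
        have hh : (23/25) * Real.sqrt (lam j) * |e i j| * Real.sqrt (lam j)
            ≤ (V * Real.sqrt (ν i)) * Real.sqrt (lam j) := by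
          have expand : (23/25) * Real.sqrt (lam j) * |e i j| * Real.sqrt (lam j)
              = (23/25) * lam j * |e i j| := by
            linear_combination ((23/25) * |e i j|) * hsjsq
          rw [expand]
          calc (23/25) * lam j * |e i j|
              ≤ (lam j - ν i) * |e i j| := mul_le_mul_of_nonneg_right hgap (abs_nonneg _)
            _ ≤ Real.sqrt (lam j) * V * Real.sqrt (ν i) := habs
            _ = (V * Real.sqrt (ν i)) * Real.sqrt (lam j) := by ring
        exact le_of_mul_le_mul_right hh hsj
      have ht : Real.sqrt (ν i) ≤ ((23/5)*(d:ℝ)^2*V^3) * Real.sqrt (lam i) := by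
        have h1 : ν i ≤ ((23/5)*(d:ℝ)^2*V^3)^2 * lam i := by
          have h2 := hν_hi i
          have h3 : 2*((d:ℝ)*V^2) ≤ ((23/5)*(d:ℝ)^2*V^3)^2 := by
            have hx := mul_le_mul_of_nonneg_right hd3V4
              (by positivity : (0:ℝ) ≤ (d:ℝ)*V^2)
            nlinarith [hx]
          nlinarith [hlam_pos i, h2, h3, mul_le_mul_of_nonneg_right h3 (le_of_lt (hlam_pos i))]
        calc Real.sqrt (ν i) ≤ Real.sqrt (((23/5)*(d:ℝ)^2*V^3)^2 * lam i) := Real.sqrt_le_sqrt h1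
          _ = ((23/5)*(d:ℝ)^2*V^3) * Real.sqrt (lam i) := by
              rw [Real.sqrt_mul (by positivity), Real.sqrt_sq (by positivity)]
      calc |e i j| * Real.sqrt (lam j)
          = (25/23) * ((23/25) * Real.sqrt (lam j) * |e i j|) := by ring
        _ ≤ (25/23) * (V * Real.sqrt (ν i)) := by linarith [hstep]
        _ ≤ (25/23) * (V * (((23/5)*(d:ℝ)^2*V^3) * Real.sqrt (lam i))) := by
            have := mul_le_mul_of_nonneg_left ht (le_of_lt hVpos)
            linarith
        _ = (5*(d:ℝ)^2*V^4) * Real.sqrt (lam i) := by ring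
end

section
/- Let D = diag(λ₁,…,λ_d) with λ₁ ≥ … ≥ λ_d > 0, let v ∈ ℝ^d and set V = max(d^{-1/2}, ‖v‖_∞). Let A = D + √D v vᵀ √D with eigenvalues ν₁ ≥ … ≥ ν_d and (e₁^{(1)},…,e_d^{(1)}) a corresponding orthonormal basis of eigenvectors. If i,j ∈ {1,…,d} satisfy max(λ_i,λ_j) > (1 + dV²) · min(λ_i,λ_j), then for every ρ ∈ (0,1), |[e_i^{(1)}]_j| ≤ (d−i+1)V² · max(2(1−ρ)^{-1/2}, 2ρ^{-1}(d−i+1)V²) / (1 − (1 + (d−i+1)V²) · min(λ_i,λ_j)/max(λ_i,λ_j)) · √(min(λ_i,λ_j)/max(λ_i,λ_j)). -/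
open Matrix Finset

/-!
Write `A = D + s sᵀ` with `s = √D v`. Coordinatewise the eigenvector equation reads
`(νᵢ - λⱼ) [eᵢ]ⱼ = sⱼ ⟨s, eᵢ⟩`, so it suffices to bound `⟨s, eᵢ⟩` above and `|νᵢ - λⱼ|`
below. Courant–Fischer, with test vectors found as nonzero solutions of `d - 1` linear
constraints, gives `λᵢ ≤ νᵢ ≤ λᵢ + ∑_{k ≥ i} sₖ²` and the interlacing `νᵢ ≤ λₖ` for `k < i`.
With `K = (d - i) V²` the first pair yields
`|νᵢ - λⱼ| ≥ max(λᵢ, λⱼ) - (1 + K) min(λᵢ, λⱼ)`. Interlacing makes each `sₖ [eᵢ]ₖ` with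
`k < i` of sign opposite to `⟨s, eᵢ⟩`, so by Cauchy–Schwarz `⟨s, eᵢ⟩² ≤ ∑_{k ≥ i} sₖ² ≤ K λᵢ`.
The factor depending on `ρ` is at least `1`.
-/

lemma exists_ne_zero_forall_dotProduct_eq_zero {ι R : Type*} [Fintype ι] [DecidableEq ι]
    [CommRing R] [IsDomain R] (r : ι → ι → R) (i₀ : ι) (h : r i₀ = 0) :
    ∃ x ≠ 0, ∀ j, r j ⬝ᵥ x = 0 := by
  obtain ⟨x, hx, hrx⟩ := exists_mulVec_eq_zero_iff.mpr
    (det_eq_zero_of_row_eq_zero (A := of r) i₀ fun j => by simp [h])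
  exact ⟨x, hx, congrFun hrx⟩

lemma sum_sq_pos_of_ne_zero {ι : Type*} [Fintype ι] {x : ι → ℝ} (hx : x ≠ 0) :
    0 < ∑ j, x j ^ 2 := by
  obtain ⟨j, hj⟩ := Function.ne_iff.mp hx
  have hj : x j ≠ 0 := hj
  exact Finset.sum_pos' (fun k _ => sq_nonneg _) ⟨j, mem_univ j, by positivity⟩

lemma sq_sum_mul_le_sum_sq_mul_sum_sq {ι : Type*} [Fintype ι] (t : Finset ι) (f g : ι → ℝ) :
    (∑ k ∈ t, f k * g k) ^ 2 ≤ (∑ k ∈ t, f k ^ 2) * ∑ k, g k ^ 2 := by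
  refine (sum_mul_sq_le_sq_mul_sq t f g).trans ?_
  exact mul_le_mul_of_nonneg_left (sum_le_univ_sum_of_nonneg fun k => sq_nonneg _)
    (sum_nonneg fun k _ => sq_nonneg _)

section

variable {ι : Type*} [Fintype ι] [DecidableEq ι]

lemma dotProduct_diagonal_mulVec (w y : ι → ℝ) :
    y ⬝ᵥ diagonal w *ᵥ y = ∑ j, w j * y j ^ 2 := by
  simp only [dotProduct, mulVec_diagonal]
  exact sum_congr rfl fun j _ => by ring

lemma diagonal_mul_vecMulVec_mul_diagonal (a b u v : ι → ℝ) :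
    diagonal a * vecMulVec u v * diagonal b = vecMulVec (a * u) (b * v) := by
  ext i j
  simp only [diagonal_mul, mul_diagonal, vecMulVec_apply, Pi.mul_apply]
  ring

lemma diagonal_add_vecMulVec_mulVec (lam s u : ι → ℝ) :
    (diagonal lam + vecMulVec s s) *ᵥ u = fun j => lam j * u j + s j * (s ⬝ᵥ u) := by
  ext j
  simp [add_mulVec, vecMulVec_mulVec, mulVec_diagonal, mul_comm]

lemma dotProduct_diagonal_add_vecMulVec_mulVec (lam s x : ι → ℝ) :
    x ⬝ᵥ (diagonal lam + vecMulVec s s) *ᵥ x = ∑ j, lam j * x j ^ 2 + (s ⬝ᵥ x) ^ 2 := by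
  rw [add_mulVec, dotProduct_add, dotProduct_diagonal_mulVec, vecMulVec_mulVec]
  simp [dotProduct_comm x s, sq]

lemma dotProduct_transpose_mul_diagonal_mul_mulVec (e : Matrix ι ι ℝ) (w x : ι → ℝ) :
    x ⬝ᵥ (eᵀ * diagonal w * e) *ᵥ x = ∑ m, w m * (e m ⬝ᵥ x) ^ 2 := by
  rw [← mulVec_mulVec, ← mulVec_mulVec, dotProduct_mulVec, vecMul_transpose,
    dotProduct_diagonal_mulVec]
  rfl

lemma sum_sq_dotProduct_eq_sum_sq {e : Matrix ι ι ℝ} (he : eᵀ * e = 1) (x : ι → ℝ) :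
    ∑ m, (e m ⬝ᵥ x) ^ 2 = ∑ j, x j ^ 2 := by
  have h := dotProduct_transpose_mul_diagonal_mul_mulVec e (fun _ => 1) x
  rw [diagonal_one, Matrix.mul_one, he, ← diagonal_one, dotProduct_diagonal_mulVec] at h
  simpa using h.symm

lemma transpose_mul_diagonal_mul_eq {A e : Matrix ι ι ℝ} {ν : ι → ℝ} (he : eᵀ * e = 1)
    (heig : ∀ i, A *ᵥ e i = ν i • e i) : eᵀ * diagonal ν * e = A := by
  have hAe : A * eᵀ = eᵀ * diagonal ν := by
    ext j m
    rw [mul_diagonal, transpose_apply]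
    simpa [mul_apply, mulVec, dotProduct, mul_comm] using congrFun (heig m) j
  rw [← hAe, Matrix.mul_assoc, he, Matrix.mul_one]

lemma transpose_mul_self_eq_one_of_orthonormal {e : Matrix ι ι ℝ}
    (he : ∀ i j, e i ⬝ᵥ e j = if i = j then 1 else 0) : eᵀ * e = 1 :=
  mul_eq_one_comm.mp <| by
    ext k l
    simpa [mul_apply, dotProduct, one_apply] using he k l

lemma sub_mul_eq_of_mulVec_eq_smul {lam s u : ι → ℝ} {μ : ℝ}
    (h : (diagonal lam + vecMulVec s s) *ᵥ u = μ • u) (k : ι) :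
    (μ - lam k) * u k = s k * (s ⬝ᵥ u) := by
  have hk := congrFun h k
  rw [diagonal_add_vecMulVec_mulVec] at hk
  simp only [Pi.smul_apply, smul_eq_mul] at hk
  linarith

end

section

variable {ι : Type*} [Fintype ι] [LinearOrder ι]

lemma sum_mul_sq_le_of_antitone {w y : ι → ℝ} (hw : Antitone w) {i : ι}
    (hy : ∀ j < i, y j = 0) : ∑ j, w j * y j ^ 2 ≤ w i * ∑ j, y j ^ 2 := by
  rw [mul_sum]
  refine sum_le_sum fun j _ => ?_
  rcases lt_or_ge j i with hj | hj
  · simp [hy j hj]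
  · exact mul_le_mul_of_nonneg_right (hw hj) (sq_nonneg _)

lemma mul_sum_sq_le_of_antitone {w y : ι → ℝ} (hw : Antitone w) {i : ι}
    (hy : ∀ j, i < j → y j = 0) : w i * ∑ j, y j ^ 2 ≤ ∑ j, w j * y j ^ 2 := by
  rw [mul_sum]
  refine sum_le_sum fun j _ => ?_
  rcases lt_or_ge i j with hj | hj
  · simp [hy j hj]
  · exact mul_le_mul_of_nonneg_right (hw hj) (sq_nonneg _)

variable {lam ν s : ι → ℝ} {e : Matrix ι ι ℝ}

lemma diagonal_le_eigenvalue (hlam : Antitone lam) (hν : Antitone ν) (he : eᵀ * e = 1)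
    (hA : eᵀ * diagonal ν * e = diagonal lam + vecMulVec s s) (i : ι) : lam i ≤ ν i := by
  obtain ⟨x, hx0, hx⟩ := exists_ne_zero_forall_dotProduct_eq_zero
    (fun j => if j < i then e j else if i < j then Pi.single j 1 else 0) i (by simp)
  have hcoef : ∀ m < i, e m ⬝ᵥ x = 0 := fun m hm => by simpa [hm] using hx m
  have hsupp : ∀ j, i < j → x j = 0 := fun j hj => by simpa [hj, hj.not_gt] using hx j
  refine le_of_mul_le_mul_right ?_ (sum_sq_pos_of_ne_zero hx0)
  calc lam i * ∑ j, x j ^ 2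
      ≤ ∑ j, lam j * x j ^ 2 + (s ⬝ᵥ x) ^ 2 :=
        le_add_of_le_of_nonneg (mul_sum_sq_le_of_antitone hlam hsupp) (sq_nonneg _)
    _ = ∑ m, ν m * (e m ⬝ᵥ x) ^ 2 := by
        rw [← dotProduct_diagonal_add_vecMulVec_mulVec, ← hA,
          dotProduct_transpose_mul_diagonal_mul_mulVec]
    _ ≤ ν i * ∑ m, (e m ⬝ᵥ x) ^ 2 := sum_mul_sq_le_of_antitone hν hcoef
    _ = ν i * ∑ j, x j ^ 2 := by rw [sum_sq_dotProduct_eq_sum_sq he]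

lemma eigenvalue_le_diagonal_add_sum_sq (hlam : Antitone lam) (hν : Antitone ν)
    (he : eᵀ * e = 1) (hA : eᵀ * diagonal ν * e = diagonal lam + vecMulVec s s) (i : ι) :
    ν i ≤ lam i + ∑ k with i ≤ k, s k ^ 2 := by
  obtain ⟨x, hx0, hx⟩ := exists_ne_zero_forall_dotProduct_eq_zero
    (fun j => if i < j then e j else if j < i then Pi.single j 1 else 0) i (by simp)
  have hcoef : ∀ m, i < m → e m ⬝ᵥ x = 0 := fun m hm => by simpa [hm] using hx m
  have hsupp : ∀ j < i, x j = 0 := fun j hj => by simpa [hj, hj.not_gt] using hx j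
  have hsx : s ⬝ᵥ x = ∑ k with i ≤ k, s k * x k := by
    rw [sum_filter_of_ne fun k _ hk => ?_]
    · rfl
    · by_contra hik
      exact hk (by simp [hsupp k (not_le.mp hik)])
  refine le_of_mul_le_mul_right ?_ (sum_sq_pos_of_ne_zero hx0)
  calc ν i * ∑ j, x j ^ 2
      = ν i * ∑ m, (e m ⬝ᵥ x) ^ 2 := by rw [sum_sq_dotProduct_eq_sum_sq he]
    _ ≤ ∑ m, ν m * (e m ⬝ᵥ x) ^ 2 := mul_sum_sq_le_of_antitone hν hcoef
    _ = ∑ j, lam j * x j ^ 2 + (s ⬝ᵥ x) ^ 2 := by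
        rw [← dotProduct_diagonal_add_vecMulVec_mulVec, ← hA,
          dotProduct_transpose_mul_diagonal_mul_mulVec]
    _ ≤ lam i * ∑ j, x j ^ 2 + (∑ k with i ≤ k, s k ^ 2) * ∑ j, x j ^ 2 := by
        rw [hsx]
        exact add_le_add (sum_mul_sq_le_of_antitone hlam hsupp)
          (sq_sum_mul_le_sum_sq_mul_sum_sq _ _ _)
    _ = (lam i + ∑ k with i ≤ k, s k ^ 2) * ∑ j, x j ^ 2 := by ring

lemma eigenvalue_le_diagonal_of_lt (hlam : Antitone lam) (hν : Antitone ν) (he : eᵀ * e = 1)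
    (hA : eᵀ * diagonal ν * e = diagonal lam + vecMulVec s s) {k i : ι} (hki : k < i) :
    ν i ≤ lam k := by
  obtain ⟨x, hx0, hx⟩ := exists_ne_zero_forall_dotProduct_eq_zero
    (fun j => if i < j then e j else if j < k then Pi.single j 1 else if j = k then s else 0) i
    (by simp [hki.not_gt, hki.ne'])
  have hcoef : ∀ m, i < m → e m ⬝ᵥ x = 0 := fun m hm => by simpa [hm] using hx m
  have hsupp : ∀ j < k, x j = 0 := fun j hj => by
    simpa [hj, (hj.trans hki).not_gt] using hx j
  have hsx : s ⬝ᵥ x = 0 := by simpa [hki.not_gt] using hx k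
  refine le_of_mul_le_mul_right ?_ (sum_sq_pos_of_ne_zero hx0)
  calc ν i * ∑ j, x j ^ 2
      = ν i * ∑ m, (e m ⬝ᵥ x) ^ 2 := by rw [sum_sq_dotProduct_eq_sum_sq he]
    _ ≤ ∑ m, ν m * (e m ⬝ᵥ x) ^ 2 := mul_sum_sq_le_of_antitone hν hcoef
    _ = ∑ j, lam j * x j ^ 2 := by
        rw [← dotProduct_transpose_mul_diagonal_mul_mulVec, hA,
          dotProduct_diagonal_add_vecMulVec_mulVec, hsx]
        ring
    _ ≤ lam k * ∑ j, x j ^ 2 := sum_mul_sq_le_of_antitone hlam hsupp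

lemma sq_dotProduct_le_sum_sq {u : ι → ℝ} {μ : ℝ} (hu : ∑ k, u k ^ 2 = 1)
    (hμ : (diagonal lam + vecMulVec s s) *ᵥ u = μ • u) {i : ι} (hint : ∀ k < i, μ ≤ lam k) :
    (s ⬝ᵥ u) ^ 2 ≤ ∑ k with i ≤ k, s k ^ 2 := by
  set c := s ⬝ᵥ u
  set T := ∑ k with i ≤ k, s k * u k
  have hhead : ∑ k with ¬ i ≤ k, c * (s k * u k) ≤ 0 := by
    refine sum_nonpos fun k hk => ?_
    have hk : k < i := not_le.mp (mem_filter.mp hk).2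
    have hck : c * (s k * u k) = (μ - lam k) * u k ^ 2 := by
      linear_combination -(u k) * sub_mul_eq_of_mulVec_eq_smul hμ k
    rw [hck]
    exact mul_nonpos_of_nonpos_of_nonneg (sub_nonpos.mpr (hint k hk)) (sq_nonneg _)
  have hcT : c ^ 2 ≤ c * T := by
    have hsplit :=
      sum_filter_add_sum_filter_not univ (fun k => i ≤ k) fun k => c * (s k * u k)
    have hc : c ^ 2 = ∑ k, c * (s k * u k) := by rw [← mul_sum, sq]; rfl
    have htail : ∑ k with i ≤ k, c * (s k * u k) = c * T := by rw [mul_sum]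
    linarith
  have hT : T ^ 2 ≤ ∑ k with i ≤ k, s k ^ 2 := by
    simpa [hu] using sq_sum_mul_le_sum_sq_mul_sum_sq {k | i ≤ k} s u
  nlinarith [sq_nonneg (c - T)]

end

lemma max_sub_mul_min_le_abs_sub {a b μ K : ℝ} (hb : 0 ≤ b) (hK : 0 ≤ K) (ha : a ≤ μ)
    (hμ : μ ≤ (1 + K) * a) : max a b - (1 + K) * min a b ≤ |μ - b| := by
  rcases le_total b a with h | h
  · rw [max_eq_left h, min_eq_right h]
    exact le_trans (by nlinarith) (le_abs_self _)
  · rw [max_eq_right h, min_eq_left h, abs_sub_comm]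
    exact le_trans (by linarith) (le_abs_self _)

lemma abs_le_of_separated {a b μ c t V K M x : ℝ} (ha : 0 < a) (hb : 0 < b) (hV : 0 ≤ V)
    (hVK : V ^ 2 ≤ K) (hM : 1 ≤ M) (hμa : a ≤ μ) (hμK : μ ≤ (1 + K) * a) (hc : c ^ 2 ≤ K * a)
    (ht : |t| ≤ V) (hx : (μ - b) * x = √b * t * c) (hsep : (1 + K) * min a b < max a b) :
    |x| ≤ K * M / (1 - (1 + K) * (min a b / max a b)) * √(min a b / max a b) := by
  set m := max a b
  set n := min a b
  have hm : 0 < m := lt_max_of_lt_left ha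
  have hK : 0 ≤ K := (sq_nonneg V).trans hVK
  have hVK' : V * √K ≤ K := by
    calc V * √K ≤ √K * √K := by gcongr; exact Real.le_sqrt_of_sq_le hVK
      _ = K := Real.mul_self_sqrt hK
  have hmn : m * √(n / m) = √(a * b) := by
    have hab : a * b = m ^ 2 * (n / m) := by
      rw [← min_mul_max a b]
      field_simp
      exact mul_comm _ _
    rw [hab, Real.sqrt_mul (sq_nonneg m), Real.sqrt_sq hm.le]
  have hab : √b * √(K * a) = √K * (m * √(n / m)) := by
    rw [hmn, ← Real.sqrt_mul hb.le, ← Real.sqrt_mul hK]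
    ring_nf
  have key : |x| * (m - (1 + K) * n) ≤ K * m * √(n / m) := by
    calc |x| * (m - (1 + K) * n) ≤ |x| * |μ - b| :=
          mul_le_mul_of_nonneg_left (max_sub_mul_min_le_abs_sub hb.le hK hμa hμK) (abs_nonneg _)
      _ = √b * |t| * |c| := by
          rw [mul_comm, ← abs_mul, hx, abs_mul, abs_mul, abs_of_nonneg (Real.sqrt_nonneg b)]
      _ ≤ √b * V * √(K * a) := by gcongr; exact Real.abs_le_sqrt hc
      _ = V * √K * (m * √(n / m)) := by rw [mul_right_comm, hab]; ring
      _ ≤ K * (m * √(n / m)) := by gcongr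
      _ = K * m * √(n / m) := by ring
  have hΔ : 1 - (1 + K) * (n / m) = (m - (1 + K) * n) / m := by field_simp
  rw [hΔ, div_div_eq_mul_div, div_mul_eq_mul_div, le_div_iff₀ (by linarith)]
  calc |x| * (m - (1 + K) * n) ≤ K * m * √(n / m) := key
    _ ≤ K * M * m * √(n / m) := by
        gcongr
        exact le_mul_of_one_le_right hK hM

lemma abs_le_supNorm {d : ℕ} (hd : 0 < d) (v : Fin d → ℝ) (k : Fin d) :
    |v k| ≤ supNorm hd v :=
  le_sup' (fun k => |v k|) (mem_univ k)

lemma one_le_two_mul_inv_sqrt_one_sub {ρ : ℝ} (hρ0 : 0 < ρ) (hρ1 : ρ < 1) :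
    1 ≤ 2 * (√(1 - ρ))⁻¹ := by
  have : 1 ≤ (√(1 - ρ))⁻¹ :=
    (one_le_inv₀ (Real.sqrt_pos.mpr (by linarith))).mpr (Real.sqrt_le_one.mpr (by linarith))
  linarith

lemma sum_filter_le_mul_sq_le {d : ℕ} {lam v : Fin d → ℝ} (hlam : Antitone lam) {i : Fin d}
    (hlam_i : 0 ≤ lam i) {V : ℝ} (hv : ∀ k, |v k| ≤ V) :
    ∑ k with i ≤ k, lam k * v k ^ 2 ≤ ((d : ℝ) - (i : ℕ)) * V ^ 2 * lam i := by
  calc ∑ k with i ≤ k, lam k * v k ^ 2 ≤ ∑ k with i ≤ k, lam i * V ^ 2 := by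
        refine sum_le_sum fun k hk => ?_
        exact mul_le_mul (hlam (mem_filter.mp hk).2)
          (sq_le_sq.mpr ((hv k).trans (le_abs_self V))) (sq_nonneg _) hlam_i
    _ = ((d : ℝ) - (i : ℕ)) * V ^ 2 * lam i := by
        rw [sum_const, filter_le_eq_Ici, Fin.card_Ici, nsmul_eq_mul, Nat.cast_sub i.isLt.le]
        ring

/-- Indices are 0-based, so the paper's count `d - i + 1` (1-based `i`) becomes `d - i`. -/
theorem eigenvector_bound_rank_one_separated
    {d : ℕ} (hd : 0 < d)
    (lam : Fin d → ℝ) (hlam_anti : Antitone lam) (hlam_pos : ∀ i, 0 < lam i)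
    (v : Fin d → ℝ)
    (V : ℝ) (hV : V = max (1 / Real.sqrt d) (supNorm hd v))
    (A : Matrix (Fin d) (Fin d) ℝ)
    (hA : A = Matrix.diagonal lam +
      (Matrix.diagonal fun i => Real.sqrt (lam i)) * Matrix.vecMulVec v v *
      (Matrix.diagonal fun i => Real.sqrt (lam i)))
    (ν : Fin d → ℝ) (hν_anti : Antitone ν)
    (e : Fin d → Fin d → ℝ)
    (he_orth : ∀ i j, e i ⬝ᵥ e j = if i = j then (1 : ℝ) else 0)
    (he_eig : ∀ i, A.mulVec (e i) = ν i • e i) :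
    ∀ i j : Fin d,
      max (lam i) (lam j) > (1 + (d : ℝ) * V ^ 2) * min (lam i) (lam j) →
      ∀ ρ : ℝ, 0 < ρ → ρ < 1 →
      |e i j| ≤ ((d : ℝ) - (i : ℕ)) * V ^ 2 *
          (max (2 * (Real.sqrt (1 - ρ))⁻¹) (2 * ρ⁻¹ * ((d : ℝ) - (i : ℕ)) * V ^ 2)) /
          (1 - (1 + ((d : ℝ) - (i : ℕ)) * V ^ 2) *
            (min (lam i) (lam j) / max (lam i) (lam j))) *
        Real.sqrt (min (lam i) (lam j) / max (lam i) (lam j)) := by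
  intro i j hsep ρ hρ0 hρ1
  set s : Fin d → ℝ := fun k => √(lam k) * v k
  have hAs : A = diagonal lam + vecMulVec s s := by
    rw [hA, diagonal_mul_vecMulVec_mul_diagonal]; rfl
  have he : (of e)ᵀ * of e = 1 := transpose_mul_self_eq_one_of_orthonormal he_orth
  have hspec : (of e)ᵀ * diagonal ν * of e = diagonal lam + vecMulVec s s :=
    hAs ▸ transpose_mul_diagonal_mul_eq he he_eig
  have heig : (diagonal lam + vecMulVec s s) *ᵥ e i = ν i • e i := hAs ▸ he_eig i
  have hunit : ∑ k, e i k ^ 2 = 1 := by simpa [dotProduct, sq] using he_orth i i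
  have hvV : ∀ k, |v k| ≤ V := fun k => hV ▸ (abs_le_supNorm hd v k).trans (le_max_right _ _)
  set K := ((d : ℝ) - (i : ℕ)) * V ^ 2
  have hVK : V ^ 2 ≤ K := by
    refine le_mul_of_one_le_left (sq_nonneg V) ?_
    linarith [show ((i : ℕ) : ℝ) + 1 ≤ d by exact_mod_cast i.isLt]
  have htail : ∑ k with i ≤ k, s k ^ 2 ≤ K * lam i := by
    simpa [s, mul_pow, Real.sq_sqrt (hlam_pos _).le] using
      sum_filter_le_mul_sq_le hlam_anti (hlam_pos i).le hvV
  have hν_low : lam i ≤ ν i := diagonal_le_eigenvalue hlam_anti hν_anti he hspec i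
  have hν_up : ν i ≤ (1 + K) * lam i := by
    linarith [eigenvalue_le_diagonal_add_sum_sq hlam_anti hν_anti he hspec i]
  have hc : (s ⬝ᵥ e i) ^ 2 ≤ K * lam i := (sq_dotProduct_le_sum_sq hunit heig
    fun k hk => eigenvalue_le_diagonal_of_lt hlam_anti hν_anti he hspec hk).trans htail
  have hsepK : (1 + K) * min (lam i) (lam j) < max (lam i) (lam j) := by
    have hKd : K ≤ d * V ^ 2 :=
      mul_le_mul_of_nonneg_right (by linarith [Nat.cast_nonneg (α := ℝ) (i : ℕ)]) (sq_nonneg V)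
    refine lt_of_le_of_lt ?_ hsep
    gcongr
    exact (lt_min (hlam_pos i) (hlam_pos j)).le
  exact abs_le_of_separated (hlam_pos i) (hlam_pos j) ((abs_nonneg _).trans (hvV i)) hVK
    (le_max_of_le_left (one_le_two_mul_inv_sqrt_one_sub hρ0 hρ1)) hν_low hν_up hc (hvV j)
    (sub_mul_eq_of_mulVec_eq_smul heig j) hsepK
end

section
/- As λ₁ → ∞, the quantity s = λ₁^{1/2} · (1 − λ₁^{-1} − √(1 − λ₁^{-1} + λ₁^{-2})) satisfies s = −λ₁^{-1/2}/2 + O(λ₁^{-3/2}); in particular, if e is the unit eigenvector (1, s)ᵀ/√(1+s²) of the matrix A = diag(λ₁,1) + √diag(λ₁,1)·(1,1)(1,1)ᵀ·√diag(λ₁,1) corresponding to its largest eigenvalue, then the second coordinate of e satisfies |[e]₂| · √λ₁ → 1/2 as λ₁ → ∞. -/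
/-!
Rationalizing, `1 - t - √(1 - t + t²) = -t / (1 - t + √(1 - t + t²))`, so with `t = λ₁⁻¹`
we get `s = -λ₁^{-1/2} / D(λ₁⁻¹)` where `D(t) = 1 - t + √(1 - t + t²)` satisfies
`1 ≤ D(t)` and `|D(t) - 2| ≤ 2t` on `[0, 1]`. This gives the `O(λ₁^{-3/2})` bound, and
`|[e]₂| √λ₁ = D(λ₁⁻¹)⁻¹ / √(1 + s²) → 1/2` since `D(t) → 2` and `s → 0`.
-/

open Filter

/-- `s(λ₁) = √λ₁ · (1 − λ₁⁻¹ − √(1 − λ₁⁻¹ + λ₁⁻²))`. -/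
noncomputable def sFun (l : ℝ) : ℝ :=
  Real.sqrt l * (1 - l⁻¹ - Real.sqrt (1 - l⁻¹ + l⁻¹ ^ 2))

open Topology

noncomputable def sDenom (t : ℝ) : ℝ :=
  1 - t + Real.sqrt (1 - t + t ^ 2)

lemma one_sub_add_sq_pos (t : ℝ) : 0 < 1 - t + t ^ 2 := by
  nlinarith [sq_nonneg (t - 1 / 2)]

lemma sub_sqrt_mul_sDenom (t : ℝ) :
    (1 - t - Real.sqrt (1 - t + t ^ 2)) * sDenom t = -t := by
  have hsq := Real.sq_sqrt (one_sub_add_sq_pos t).le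
  rw [sDenom]
  linear_combination -hsq

lemma one_le_sDenom {t : ℝ} (h1 : t ≤ 1) : 1 ≤ sDenom t := by
  have hsq := Real.sq_sqrt (one_sub_add_sq_pos t).le
  have hroot : t ≤ Real.sqrt (1 - t + t ^ 2) :=
    Real.le_sqrt_of_sq_le (by nlinarith)
  rw [sDenom]
  linarith

lemma abs_sDenom_sub_two_le {t : ℝ} (h0 : 0 ≤ t) (h1 : t ≤ 1) : |sDenom t - 2| ≤ 2 * t := by
  have hsq := Real.sq_sqrt (one_sub_add_sq_pos t).le
  have hroot_le : Real.sqrt (1 - t + t ^ 2) ≤ 1 :=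
    Real.sqrt_le_one.mpr (by nlinarith)
  have hroot_ge : 1 - t ≤ Real.sqrt (1 - t + t ^ 2) :=
    Real.le_sqrt_of_sq_le (by nlinarith)
  rw [sDenom, abs_le]
  constructor <;> linarith

lemma tendsto_sDenom_zero : Tendsto sDenom (𝓝 0) (𝓝 2) := by
  have hcont : Continuous sDenom := by unfold sDenom; fun_prop
  convert hcont.tendsto 0
  norm_num [sDenom]

lemma sFun_eq_neg_inv_sqrt_div {l : ℝ} (hl : 1 ≤ l) :
    sFun l = -(Real.sqrt l)⁻¹ / sDenom l⁻¹ := by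
  have hl0 : 0 < l := by linarith
  have hD : 0 < sDenom l⁻¹ :=
    one_pos.trans_le (one_le_sDenom (inv_le_one_of_one_le₀ hl))
  have hinv : (Real.sqrt l)⁻¹ = Real.sqrt l * l⁻¹ := by
    rw [← Real.sqrt_inv, Real.sqrt_eq_iff_mul_self_eq_of_pos (by positivity)]
    field_simp
    exact Real.sq_sqrt hl0.le
  rw [eq_div_iff hD.ne', sFun, mul_assoc, sub_sqrt_mul_sDenom, hinv]
  ring

lemma rpow_neg_three_halves {l : ℝ} (hl : 0 < l) :
    l ^ (-(3 : ℝ) / 2) = (Real.sqrt l)⁻¹ * l⁻¹ := by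
  rw [Real.sqrt_eq_rpow, ← Real.rpow_neg hl.le, ← Real.rpow_neg_one, ← Real.rpow_add hl]
  norm_num

lemma abs_sFun_add_inv_sqrt_le {l : ℝ} (hl : 1 ≤ l) :
    |sFun l - (-(Real.sqrt l)⁻¹ / 2)| ≤ l ^ (-(3 : ℝ) / 2) := by
  have hl0 : 0 < l := by linarith
  have ht0 : 0 ≤ l⁻¹ := inv_nonneg.mpr hl0.le
  have ht1 : l⁻¹ ≤ 1 := inv_le_one_of_one_le₀ hl
  have hD := one_le_sDenom ht1
  have hD0 : sDenom l⁻¹ ≠ 0 := (one_pos.trans_le hD).ne'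
  have hdiff : sFun l - (-(Real.sqrt l)⁻¹ / 2) =
      (Real.sqrt l)⁻¹ * ((sDenom l⁻¹ - 2) / (2 * sDenom l⁻¹)) := by
    rw [sFun_eq_neg_inv_sqrt_div hl]
    generalize sDenom l⁻¹ = D at hD0
    field_simp
    ring
  rw [hdiff, abs_mul, abs_div, abs_of_pos (by positivity : 0 < (Real.sqrt l)⁻¹),
    abs_of_pos (by positivity : 0 < 2 * sDenom l⁻¹), rpow_neg_three_halves hl0]
  gcongr
  rw [div_le_iff₀ (by positivity)]
  nlinarith [abs_sDenom_sub_two_le ht0 ht1]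

lemma tendsto_inv_sDenom_inv_atTop :
    Tendsto (fun l : ℝ => (sDenom l⁻¹)⁻¹) atTop (𝓝 (1 / 2)) := by
  rw [one_div]
  exact (tendsto_sDenom_zero.comp tendsto_inv_atTop_zero).inv₀ two_ne_zero

lemma tendsto_sFun_atTop : Tendsto sFun atTop (𝓝 0) := by
  have hsqrt : Tendsto (fun l : ℝ => (Real.sqrt l)⁻¹) atTop (𝓝 0) :=
    tendsto_inv_atTop_zero.comp Real.tendsto_sqrt_atTop
  have h := (hsqrt.neg.mul tendsto_inv_sDenom_inv_atTop).congr'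
    ((eventually_ge_atTop 1).mono fun l hl => (sFun_eq_neg_inv_sqrt_div hl).symm)
  simpa using h

lemma abs_sFun_mul_sqrt {l : ℝ} (hl : 1 ≤ l) : |sFun l| * Real.sqrt l = (sDenom l⁻¹)⁻¹ := by
  have hD := one_le_sDenom (inv_le_one_of_one_le₀ hl)
  rw [sFun_eq_neg_inv_sqrt_div hl, abs_div, abs_neg, abs_of_pos (by positivity),
    abs_of_pos (by positivity)]
  field_simp

/-- **Asymptotics of the 2×2 example.** As `λ₁ → ∞`,
`s = −λ₁^{-1/2}/2 + O(λ₁^{-3/2})`, and for the unit eigenvector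
`e = (1, s)ᵀ/√(1+s²)` of `A = diag(λ₁,1) + √diag(λ₁,1)·(1,1)(1,1)ᵀ·√diag(λ₁,1)`
associated with its largest eigenvalue, `|[e]₂| · √λ₁ → 1/2`. -/
theorem example_dim_two_asymptotics :
    (∃ M lam₀ : ℝ, ∀ l : ℝ, lam₀ ≤ l →
      |sFun l - (-(Real.sqrt l)⁻¹ / 2)| ≤ M * l ^ (-(3 : ℝ) / 2)) ∧
    Tendsto (fun l : ℝ => |sFun l / Real.sqrt (1 + sFun l ^ 2)| * Real.sqrt l)
      atTop (nhds (1 / 2)) := by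
  refine ⟨⟨1, 1, fun l hl => by simpa using abs_sFun_add_inv_sqrt_le hl⟩, ?_⟩
  have hnorm : Tendsto (fun l => Real.sqrt (1 + sFun l ^ 2)) atTop (𝓝 1) := by
    simpa using ((tendsto_sFun_atTop.pow 2).const_add 1).sqrt
  have h := tendsto_inv_sDenom_inv_atTop.div hnorm one_ne_zero
  rw [div_one] at h
  refine h.congr' ((eventually_ge_atTop 1).mono fun l hl => ?_)
  dsimp only [Pi.div_apply]
  rw [abs_div, abs_of_pos (Real.sqrt_pos.mpr (by positivity)), div_mul_eq_mul_div,
    abs_sFun_mul_sqrt hl]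
end

section
/- Let A be a d×d real symmetric matrix with eigenvalues ν₁ ≥ … ≥ ν_d (counted with multiplicity). Then for every i ∈ {1,…,d}, ν_i ≤ max_{j ∈ {i,…,d}} Σ_{k=i}^{d} |A_{j,k}|; that is, the i-th largest eigenvalue of A is at most the largest absolute row sum of the trailing principal submatrix of A formed by rows and columns i through d. -/
open Matrix Finset

/-!
Courant–Fischer: the span of `e 0, …, e i` has dimension `i + 1`, so it contains a nonzero `w`
vanishing on the `i` coordinates below `i`. Its Rayleigh quotient is at least `ν i`, since
`ν` is antitone, and at most the largest absolute row sum of the trailing block, by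
`2 |a b| ≤ a² + b²` and the symmetry of `A` (Schur's test).
-/

theorem exists_ne_zero_sum_smul_eq_zero_on {n ι K : Type*} [Fintype ι] [Field K]
    (v : ι → n → K) (s : Finset n) (hs : #s < Fintype.card ι) :
    ∃ c : ι → K, c ≠ 0 ∧ ∀ m ∈ s, (∑ j, c j • v j) m = 0 := by
  let f : (ι → K) →ₗ[K] (s → K) :=
    LinearMap.pi fun m => (LinearMap.proj m.1).comp (Fintype.linearCombination K v)
  obtain ⟨c, hc, hc0⟩ := Submodule.exists_mem_ne_zero_of_ne_bot <|
    LinearMap.ker_ne_bot_of_finrank_lt (f := f) (by simpa using hs)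
  refine ⟨c, hc0, fun m hm => ?_⟩
  simpa [f, Fintype.linearCombination_apply] using congrFun hc ⟨m, hm⟩

section

variable {n ι : Type*} [Fintype n] [Fintype ι] [DecidableEq ι]

theorem sum_smul_dotProduct_sum_smul {R : Type*} [CommSemiring R] {e : ι → n → R}
    (he : ∀ j k, e j ⬝ᵥ e k = if j = k then 1 else 0) (c f : ι → R) :
    (∑ j, c j • e j) ⬝ᵥ (∑ j, f j • e j) = ∑ j, c j * f j := by
  simp [sum_dotProduct, dotProduct_sum, he, mul_comm]

theorem mul_dotProduct_le_dotProduct_mulVec_of_le_eigenvalues {A : Matrix n n ℝ}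
    {e : ι → n → ℝ} {ν : ι → ℝ} {l : ℝ} (he : ∀ j k, e j ⬝ᵥ e k = if j = k then 1 else 0)
    (heig : ∀ j, A *ᵥ e j = ν j • e j) (hν : ∀ j, l ≤ ν j) (c : ι → ℝ) :
    l * ((∑ j, c j • e j) ⬝ᵥ (∑ j, c j • e j)) ≤ (∑ j, c j • e j) ⬝ᵥ A *ᵥ (∑ j, c j • e j) := by
  have hAw : A *ᵥ (∑ j, c j • e j) = ∑ j, (ν j * c j) • e j := by
    simp only [mulVec_sum, mulVec_smul, heig, smul_smul, mul_comm]
  rw [hAw, sum_smul_dotProduct_sum_smul he, sum_smul_dotProduct_sum_smul he, mul_sum]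
  refine sum_le_sum fun j _ => ?_
  nlinarith [mul_self_nonneg (c j), hν j]

end

section

variable {n : Type*} {S : Finset n} {A : Matrix n n ℝ}

theorem sum_sum_mul_le_sum_rowSum_mul_sq (hA : A.IsSymm) (w : n → ℝ) :
    ∑ m ∈ S, ∑ k ∈ S, w m * A m k * w k ≤ ∑ m ∈ S, (∑ k ∈ S, |A m k|) * w m ^ 2 := by
  have hterm : ∀ m k, w m * A m k * w k ≤ (|A m k| * w m ^ 2 + |A k m| * w k ^ 2) / 2 := by
    intro m k
    rw [hA.apply m k]
    have := two_mul_le_add_sq |w m| |w k|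
    have h := le_abs_self (w m * A m k * w k)
    rw [abs_mul, abs_mul] at h
    nlinarith [abs_nonneg (A m k), sq_abs (w m), sq_abs (w k)]
  calc ∑ m ∈ S, ∑ k ∈ S, w m * A m k * w k
      ≤ ∑ m ∈ S, ∑ k ∈ S, (|A m k| * w m ^ 2 + |A k m| * w k ^ 2) / 2 := by
        gcongr with m _ k _; exact hterm m k
    _ = ∑ m ∈ S, (∑ k ∈ S, |A m k|) * w m ^ 2 := by
        simp only [← sum_div, sum_add_distrib, sum_mul]
        rw [sum_comm (f := fun m k => |A k m| * w k ^ 2)]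
        ring

theorem dotProduct_mulVec_le_of_support_subset [Fintype n] (hA : A.IsSymm) {w : n → ℝ}
    (hw : ∀ m ∉ S, w m = 0) {M : ℝ} (hM : ∀ m ∈ S, ∑ k ∈ S, |A m k| ≤ M) :
    w ⬝ᵥ A *ᵥ w ≤ M * (w ⬝ᵥ w) := by
  have hsum : ∀ f : n → ℝ, (∀ m ∉ S, f m = 0) → ∑ m, f m = ∑ m ∈ S, f m := fun f hf =>
    (sum_subset (subset_univ S) fun m _ hm => hf m hm).symm
  calc w ⬝ᵥ A *ᵥ w = ∑ m ∈ S, ∑ k ∈ S, w m * A m k * w k := by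
        simp only [dotProduct, mulVec, mul_sum, ← mul_assoc]
        rw [hsum _ fun m hm => by simp [hw m hm]]
        exact sum_congr rfl fun m _ => hsum _ fun k hk => by simp [hw k hk]
    _ ≤ ∑ m ∈ S, (∑ k ∈ S, |A m k|) * w m ^ 2 := sum_sum_mul_le_sum_rowSum_mul_sq hA w
    _ ≤ ∑ m ∈ S, M * w m ^ 2 := by gcongr with m hm; exact hM m hm
    _ = M * (w ⬝ᵥ w) := by
        rw [← mul_sum, dotProduct, hsum _ fun m hm => by simp [hw m hm]]
        simp only [sq]

end

/-- **Gersgorin-type bound on the i-th largest eigenvalue of a symmetric matrix:**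
`νᵢ ≤ max_{j ≥ i} ∑_{k ≥ i} |A_{j,k}|` (indices 0-based). The eigenvalues `ν` are
listed in decreasing order with multiplicity, witnessed by an orthonormal system of
eigenvectors. -/
theorem eigenvalue_le_trailing_row_sum
    {d : ℕ}
    (A : Matrix (Fin d) (Fin d) ℝ) (hA : A.IsSymm)
    (ν : Fin d → ℝ) (hν_anti : Antitone ν)
    (e : Fin d → Fin d → ℝ)
    (he_orth : ∀ i j, e i ⬝ᵥ e j = if i = j then (1 : ℝ) else 0)
    (he_eig : ∀ i, A.mulVec (e i) = ν i • e i)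
    (i : Fin d) :
    ν i ≤ (Finset.Ici i).sup' ⟨i, Finset.mem_Ici.mpr le_rfl⟩
      (fun j => ∑ k ∈ Finset.Ici i, |A j k|) := by
  obtain ⟨c, hc, hc_vanish⟩ :=
    exists_ne_zero_sum_smul_eq_zero_on (fun j : Set.Iic i => e j) (Iio i) (by simp)
  have horth : ∀ j k : Set.Iic i, e j ⬝ᵥ e k = if j = k then 1 else 0 := by
    simp [he_orth, Subtype.ext_iff]
  have hpos : 0 < (∑ j, c j • e j) ⬝ᵥ (∑ j, c j • e j) := by
    obtain ⟨j, hj⟩ := Function.ne_iff.mp hc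
    rw [sum_smul_dotProduct_sum_smul horth]
    exact sum_pos' (fun _ _ => mul_self_nonneg _) ⟨j, mem_univ _, mul_self_pos.mpr hj⟩
  have hlow := mul_dotProduct_le_dotProduct_mulVec_of_le_eigenvalues horth (fun j => he_eig j)
    (fun j => hν_anti j.2) c
  refine le_of_mul_le_mul_right (hlow.trans ?_) hpos
  exact dotProduct_mulVec_le_of_support_subset (S := Ici i) hA
    (fun m hm => hc_vanish m (by simpa using hm))
    (fun m hm => le_sup' (fun j => ∑ k ∈ Ici i, |A j k|) hm)
end

section
/- Let D = diag(λ₁,…,λ_d) with λ₁ ≥ … ≥ λ_d > 0, let v ∈ ℝ^d, let A = D + √D v vᵀ √D, and let ν₁ ≥ … ≥ ν_d be the eigenvalues of A. Then for every i ∈ {1,…,d}, ν_i ≤ max_{j ∈ {i,…,d}} Σ_{k=i}^{d} √(λ_j λ_k) · (𝟙{j=k} + ‖v‖_∞ · |[v]_j|). -/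
open Matrix Finset

/-- Bound on the eigenvalues of `D + √D v vᵀ √D`:
`νᵢ ≤ max_{j ≥ i} ∑_{k ≥ i} √(λⱼλₖ)(𝟙{j=k} + ‖v‖_∞ |[v]_j|)` (indices 0-based). -/
theorem eigenvalue_bound_entrywise
    {d : ℕ} (hd : 0 < d)
    (lam : Fin d → ℝ) (hlam_anti : Antitone lam) (hlam_pos : ∀ i, 0 < lam i)
    (v : Fin d → ℝ)
    (A : Matrix (Fin d) (Fin d) ℝ)
    (hA : A = Matrix.diagonal lam +
      (Matrix.diagonal fun i => Real.sqrt (lam i)) * Matrix.vecMulVec v v *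
      (Matrix.diagonal fun i => Real.sqrt (lam i)))
    (ν : Fin d → ℝ) (hν_anti : Antitone ν)
    (e : Fin d → Fin d → ℝ)
    (he_orth : ∀ i j, e i ⬝ᵥ e j = if i = j then (1 : ℝ) else 0)
    (he_eig : ∀ i, A.mulVec (e i) = ν i • e i)
    (i : Fin d) :
    ν i ≤ (Finset.Ici i).sup' ⟨i, Finset.mem_Ici.mpr le_rfl⟩
      (fun j => ∑ k ∈ Finset.Ici i,
        Real.sqrt (lam j * lam k) *
          ((if j = k then (1 : ℝ) else 0) + supNorm hd v * |v j|)) := by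
  classical
  set M := (Finset.Ici i).sup' ⟨i, Finset.mem_Ici.mpr le_rfl⟩
      (fun j => ∑ k ∈ Finset.Ici i,
        Real.sqrt (lam j * lam k) *
          ((if j = k then (1 : ℝ) else 0) + supNorm hd v * |v j|)) with hM
  clear_value M
  -- entrywise formula for A
  have hAe : ∀ j k, A j k = (if j = k then lam j else 0) +
      Real.sqrt (lam j) * (v j * v k) * Real.sqrt (lam k) := by
    intro j k
    subst hA
    simp [Matrix.add_apply, Matrix.mul_apply, Matrix.diagonal_apply,
      Matrix.vecMulVec_apply, Matrix.diagonal_mul, Matrix.mul_diagonal]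
  have hsym : ∀ j k, A k j = A j k := by
    intro j k
    rw [hAe, hAe]
    by_cases h : j = k
    · subst h; ring
    · simp [h, Ne.symm h]; ring
  have hvk : ∀ k, |v k| ≤ supNorm hd v := fun k =>
    Finset.le_sup' (fun j => |v j|) (Finset.mem_univ k)
  have hsup0 : 0 ≤ supNorm hd v := (abs_nonneg _).trans (hvk ⟨0, hd⟩)
  have hbd : ∀ j k, |A j k| ≤ Real.sqrt (lam j * lam k) *
      ((if j = k then (1 : ℝ) else 0) + supNorm hd v * |v j|) := by
    intro j k
    have hsj : (0:ℝ) ≤ Real.sqrt (lam j) := Real.sqrt_nonneg _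
    have hsk : (0:ℝ) ≤ Real.sqrt (lam k) := Real.sqrt_nonneg _
    have hmul : Real.sqrt (lam j * lam k) = Real.sqrt (lam j) * Real.sqrt (lam k) :=
      Real.sqrt_mul (hlam_pos j).le _
    have h1 : |A j k| ≤ (if j = k then lam j else 0) +
        Real.sqrt (lam j) * Real.sqrt (lam k) * (|v j| * |v k|) := by
      rw [hAe]
      refine (abs_add_le _ _).trans ?_
      gcongr
      · by_cases h : j = k <;> simp [h, abs_of_nonneg (hlam_pos k).le]
      · refine le_of_eq ?_
        rw [abs_mul, abs_mul, abs_mul, abs_of_nonneg hsj, abs_of_nonneg hsk]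
        ring
    have h2 : Real.sqrt (lam j) * Real.sqrt (lam k) * (|v j| * |v k|) ≤
        Real.sqrt (lam j) * Real.sqrt (lam k) * (supNorm hd v * |v j|) := by
      have : |v j| * |v k| ≤ supNorm hd v * |v j| := by
        have := hvk k
        nlinarith [abs_nonneg (v j)]
      nlinarith [mul_nonneg hsj hsk]
    refine h1.trans ?_
    rw [hmul]
    by_cases h : j = k
    · subst h
      rw [if_pos rfl, if_pos rfl]
      nlinarith [h2, Real.mul_self_sqrt (hlam_pos j).le]
    · simp only [if_neg h]
      nlinarith [h2]
  -- build a nonzero combination of top eigenvectors vanishing below i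
  set n : ℕ := (i : ℕ) with hn
  have hn1 : n + 1 ≤ d := i.isLt
  set f : Fin (n + 1) → Fin d := Fin.castLE hn1 with hf
  have hfinj : Function.Injective f := Fin.castLE_injective hn1
  have hfle : ∀ m, f m ≤ i := by
    intro m
    rw [Fin.le_def]
    exact Nat.lt_succ_iff.mp m.isLt
  set T : (Fin (n + 1) → ℝ) →ₗ[ℝ] (Fin n → ℝ) :=
    { toFun := fun c k => ∑ m, c m * e (f m) (Fin.castLE (Nat.le_of_lt i.isLt) k)
      map_add' := by
        intro a b; funext k
        simp [add_mul, Finset.sum_add_distrib]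
      map_smul' := by
        intro r a; funext k
        simp [Finset.mul_sum, mul_assoc] } with hT
  have hTnotinj : ¬ Function.Injective T := by
    intro h
    have := LinearMap.finrank_le_finrank_of_injective h
    rw [Module.finrank_fin_fun, Module.finrank_fin_fun] at this
    omega
  obtain ⟨a, b, hab, hne⟩ : ∃ a b, T a = T b ∧ a ≠ b := by
    simpa [Function.Injective, not_forall] using hTnotinj
  set c : Fin (n + 1) → ℝ := a - b with hc
  have hc0 : T c = 0 := by rw [hc, map_sub, hab, sub_self]
  obtain ⟨m0, hm0⟩ : ∃ m, c m ≠ 0 := by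
    by_contra h
    push_neg at h
    exact hne (sub_eq_zero.mp (funext h))
  set x : Fin d → ℝ := fun k => ∑ m, c m * e (f m) k with hx
  clear_value x
  have hxlow : ∀ k : Fin d, k < i → x k = 0 := by
    intro k hk
    have hk' : (k : ℕ) < n := hk
    have hkk : Fin.castLE (Nat.le_of_lt i.isLt) ⟨(k : ℕ), hk'⟩ = k := by
      ext; rfl
    have := congrFun hc0 ⟨(k : ℕ), hk'⟩
    simpa [hT, hx, hkk] using this
  -- spectral computations
  have dot_lemma : ∀ u w : Fin (n + 1) → ℝ,
      (fun j => ∑ m, u m * e (f m) j) ⬝ᵥ (fun j => ∑ m, w m * e (f m) j) = ∑ m, u m * w m := by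
    intro u w
    simp only [dotProduct]
    have h1 : ∀ j : Fin d, (∑ m, u m * e (f m) j) * (∑ p, w p * e (f p) j)
        = ∑ m, ∑ p, (u m * w p) * (e (f m) j * e (f p) j) := by
      intro j
      rw [Finset.sum_mul_sum]
      exact Finset.sum_congr rfl fun m _ => Finset.sum_congr rfl fun p _ => by ring
    simp only [h1]
    rw [Finset.sum_comm]
    refine Finset.sum_congr rfl fun m _ => ?_
    rw [Finset.sum_comm]
    calc ∑ p, ∑ j, (u m * w p) * (e (f m) j * e (f p) j)
        = ∑ p, (u m * w p) * (e (f m) ⬝ᵥ e (f p)) := by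
          refine Finset.sum_congr rfl fun p _ => ?_
          rw [dotProduct, Finset.mul_sum]
      _ = u m * w m := by
          simp only [he_orth, hfinj.eq_iff, mul_ite, mul_one, mul_zero]
          simp
  have hmulx : A.mulVec x = fun j => ∑ m, (c m * ν (f m)) * e (f m) j := by
    funext j
    simp only [Matrix.mulVec, dotProduct, hx, Finset.mul_sum]
    rw [Finset.sum_comm]
    refine Finset.sum_congr rfl fun m _ => ?_
    have h2 := congrFun (he_eig (f m)) j
    simp only [Matrix.mulVec, dotProduct, Pi.smul_apply, smul_eq_mul] at h2
    calc ∑ k, A j k * (c m * e (f m) k) = c m * ∑ k, A j k * e (f m) k := by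
          rw [Finset.mul_sum]; exact Finset.sum_congr rfl fun k _ => by ring
      _ = (c m * ν (f m)) * e (f m) j := by rw [h2]; ring
  have hQ : x ⬝ᵥ A.mulVec x = ∑ m, c m * (c m * ν (f m)) := by
    rw [hmulx, hx]; exact dot_lemma c fun m => c m * ν (f m)
  have hS : x ⬝ᵥ x = ∑ m, c m ^ 2 := by
    have h0 := dot_lemma c c
    rw [show (∑ m, c m * c m) = ∑ m, c m ^ 2 from Finset.sum_congr rfl fun m _ => (sq (c m)).symm] at h0
    rw [hx]
    exact h0
  have hSpos : 0 < x ⬝ᵥ x := by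
    rw [hS]
    refine Finset.sum_pos' (fun m _ => sq_nonneg _) ⟨m0, Finset.mem_univ _, ?_⟩
    exact lt_of_le_of_ne (sq_nonneg _) (Ne.symm (pow_ne_zero 2 hm0))
  have hlow : ν i * (x ⬝ᵥ x) ≤ x ⬝ᵥ A.mulVec x := by
    rw [hS, hQ, Finset.mul_sum]
    refine Finset.sum_le_sum fun m _ => ?_
    have h1 : ν i ≤ ν (f m) := hν_anti (hfle m)
    nlinarith [sq_nonneg (c m), sq (c m)]
  -- upper bound via Gershgorin-type estimate
  have hxoff : ∀ j : Fin d, j ∉ Finset.Ici i → x j = 0 := by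
    intro j hj
    exact hxlow j (by simpa using hj)
  have hMj : ∀ j ∈ Finset.Ici i, (∑ k ∈ Finset.Ici i,
      Real.sqrt (lam j * lam k) * ((if j = k then (1 : ℝ) else 0) + supNorm hd v * |v j|)) ≤ M := by
    intro j hj
    rw [hM]
    exact Finset.le_sup' (fun j => ∑ k ∈ Finset.Ici i,
      Real.sqrt (lam j * lam k) * ((if j = k then (1 : ℝ) else 0) + supNorm hd v * |v j|)) hj
  have hQup : x ⬝ᵥ A.mulVec x ≤ M * (x ⬝ᵥ x) := by
    have key : x ⬝ᵥ A.mulVec x = ∑ j, ∑ k, x j * A j k * x k := by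
      simp only [dotProduct, Matrix.mulVec, Finset.mul_sum]
      exact Finset.sum_congr rfl fun j _ => Finset.sum_congr rfl fun k _ => by ring
    rw [key]
    have step1 : ∑ j, ∑ k, x j * A j k * x k =
        ∑ j ∈ Finset.Ici i, ∑ k ∈ Finset.Ici i, x j * A j k * x k := by
      rw [← Finset.sum_subset (Finset.subset_univ (Finset.Ici i))
        (fun j _ hj => by simp [hxoff j hj])]
      refine Finset.sum_congr rfl fun j _ => ?_
      rw [← Finset.sum_subset (Finset.subset_univ (Finset.Ici i))
        (fun k _ hk => by simp [hxoff k hk])]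
    rw [step1]
    have step2 : ∑ j ∈ Finset.Ici i, ∑ k ∈ Finset.Ici i, x j * A j k * x k ≤
        ∑ j ∈ Finset.Ici i, ∑ k ∈ Finset.Ici i, |A j k| * ((x j ^ 2 + x k ^ 2) / 2) := by
      refine Finset.sum_le_sum fun j _ => Finset.sum_le_sum fun k _ => ?_
      have h1 : x j * A j k * x k ≤ |x j| * |A j k| * |x k| := by
        calc x j * A j k * x k ≤ |x j * A j k * x k| := le_abs_self _
          _ = |x j| * |A j k| * |x k| := by rw [abs_mul, abs_mul]
      refine h1.trans ?_
      have h2 : |x j| * |x k| ≤ (x j ^ 2 + x k ^ 2) / 2 := by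
        nlinarith [sq_nonneg (|x j| - |x k|), sq_abs (x j), sq_abs (x k)]
      calc |x j| * |A j k| * |x k| = |A j k| * (|x j| * |x k|) := by ring
        _ ≤ |A j k| * ((x j ^ 2 + x k ^ 2) / 2) :=
            mul_le_mul_of_nonneg_left h2 (abs_nonneg _)
    refine step2.trans ?_
    have step3 : ∑ j ∈ Finset.Ici i, ∑ k ∈ Finset.Ici i, |A j k| * ((x j ^ 2 + x k ^ 2) / 2) =
        ∑ j ∈ Finset.Ici i, (∑ k ∈ Finset.Ici i, |A j k|) * x j ^ 2 := by
      have expand : ∀ j k : Fin d, |A j k| * ((x j ^ 2 + x k ^ 2) / 2) =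
          |A j k| * x j ^ 2 / 2 + |A j k| * x k ^ 2 / 2 := fun j k => by ring
      simp only [expand, Finset.sum_add_distrib]
      have swap : ∑ j ∈ Finset.Ici i, ∑ k ∈ Finset.Ici i, |A j k| * x k ^ 2 / 2 =
          ∑ j ∈ Finset.Ici i, ∑ k ∈ Finset.Ici i, |A j k| * x j ^ 2 / 2 := by
        rw [Finset.sum_comm]
        exact Finset.sum_congr rfl fun j _ => Finset.sum_congr rfl fun k _ => by rw [hsym]
      rw [swap, ← Finset.sum_add_distrib]
      refine Finset.sum_congr rfl fun j _ => ?_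
      rw [Finset.sum_mul, ← Finset.sum_add_distrib]
      exact Finset.sum_congr rfl fun k _ => by ring
    rw [step3]
    have step4 : ∑ j ∈ Finset.Ici i, (∑ k ∈ Finset.Ici i, |A j k|) * x j ^ 2 ≤
        ∑ j ∈ Finset.Ici i, M * x j ^ 2 := by
      refine Finset.sum_le_sum fun j hj => ?_
      have hfj : (∑ k ∈ Finset.Ici i, |A j k|) ≤ M := by
        refine le_trans ?_ (hMj j hj)
        exact Finset.sum_le_sum fun k _ => hbd j k
      exact mul_le_mul_of_nonneg_right hfj (sq_nonneg _)
    refine step4.trans ?_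
    rw [← Finset.mul_sum]
    have : ∑ j ∈ Finset.Ici i, x j ^ 2 = x ⬝ᵥ x := by
      rw [Finset.sum_subset (Finset.subset_univ (Finset.Ici i))
        (fun j _ hj => by simp [hxoff j hj])]
      simp only [dotProduct]
      exact Finset.sum_congr rfl fun j _ => sq (x j)
    rw [this]
  have := hlow.trans hQup
  exact le_of_mul_le_mul_right (by linarith [this]) hSpos
end

section
/- Let D = diag(λ₁,…,λ_d) with λ₁,…,λ_d > 0, let v ∈ ℝ^d have only nonzero entries, and let A = D + √D v vᵀ √D. Let ν be an eigenvalue of A with ν ≠ λ_j for all j, and let e be a unit eigenvector of A for ν. Then there exists a constant C ∈ ℝ such that [e]_j = C · √λ_j [v]_j / (λ_j − ν) for all j ∈ {1,…,d}, and this constant satisfies |C| ≤ min_{1 ≤ j ≤ d} |λ_j − ν| / (√λ_j · |[v]_j|). -/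
open Matrix Finset

/-- **Bunch–Nielsen–Sorensen formula with a bound on the normalizing constant.**
If `ν` is an eigenvalue of `A = D + √D v vᵀ √D` distinct from every `λⱼ` and `e` is a
unit eigenvector for `ν`, then `[e]_j = C √λⱼ [v]_j/(λⱼ − ν)` for some constant `C`
with `|C| ≤ min_j |λⱼ − ν|/(√λⱼ |[v]_j|)`. -/
theorem BNS_formula_with_constant_bound
    {d : ℕ} (hd : 0 < d)
    (lam : Fin d → ℝ) (hlam_pos : ∀ i, 0 < lam i)
    (v : Fin d → ℝ) (hv : ∀ j, v j ≠ 0)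
    (A : Matrix (Fin d) (Fin d) ℝ)
    (hA : A = Matrix.diagonal lam +
      (Matrix.diagonal fun i => Real.sqrt (lam i)) * Matrix.vecMulVec v v *
      (Matrix.diagonal fun i => Real.sqrt (lam i)))
    (ν : ℝ) (hν : ∀ j, ν ≠ lam j)
    (e : Fin d → ℝ) (he_unit : e ⬝ᵥ e = 1) (he_eig : A.mulVec e = ν • e) :
    ∃ C : ℝ,
      (∀ j : Fin d, e j = C * (Real.sqrt (lam j) * v j / (lam j - ν))) ∧
      |C| ≤ Finset.univ.inf'
        (Finset.univ_nonempty_iff.mpr (Fin.pos_iff_nonempty.mp hd))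
        (fun j => |lam j - ν| / (Real.sqrt (lam j) * |v j|)) := by
  set S : ℝ := ∑ k, Real.sqrt (lam k) * (v k * e k) with hS
  have key : ∀ j, lam j * e j + Real.sqrt (lam j) * v j * S = ν * e j := by
    intro j
    have h := congrFun he_eig j
    rw [hA] at h
    simp only [Matrix.add_mulVec, Matrix.mulVec_diagonal, Pi.add_apply, Pi.smul_apply,
      smul_eq_mul, Matrix.mulVec_mulVec] at h
    rw [← Matrix.mulVec_mulVec, ← Matrix.mulVec_mulVec] at h
    have hd2 : (Matrix.diagonal fun i => Real.sqrt (lam i)) *ᵥ e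
        = fun i => Real.sqrt (lam i) * e i :=
      funext fun i => Matrix.mulVec_diagonal _ _ _
    rw [hd2] at h
    simp only [Matrix.mulVec_diagonal] at h
    have hvv : (Matrix.vecMulVec v v).mulVec (fun i => Real.sqrt (lam i) * e i) j
        = v j * S := by
      simp only [Matrix.mulVec, dotProduct, Matrix.vecMulVec_apply, hS,
        Finset.mul_sum]
      exact Finset.sum_congr rfl fun k _ => by ring
    rw [hvv] at h
    rw [← h]; ring
  refine ⟨-S, fun j => ?_, ?_⟩
  · have hne : lam j - ν ≠ 0 := sub_ne_zero.mpr fun h => hν j h.symm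
    have := key j
    field_simp
    nlinarith [key j]
  · apply Finset.le_inf'
    intro j _
    have hsq : Real.sqrt (lam j) > 0 := Real.sqrt_pos.mpr (hlam_pos j)
    have hne : lam j - ν ≠ 0 := sub_ne_zero.mpr fun h => hν j h.symm
    have hej : |e j| ≤ 1 := by
      have h1 : e j * e j ≤ 1 := by
        rw [← he_unit]
        simp only [dotProduct]
        have : ∀ k ∈ Finset.univ, (0:ℝ) ≤ e k * e k := fun k _ => mul_self_nonneg _
        exact Finset.single_le_sum this (Finset.mem_univ j)
      nlinarith [abs_nonneg (e j), sq_abs (e j)]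
    have heq : e j = -S * (Real.sqrt (lam j) * v j / (lam j - ν)) := by
      field_simp
      nlinarith [key j]
    have habs : |e j| = |S| * (Real.sqrt (lam j) * |v j| / |lam j - ν|) := by
      rw [heq, abs_mul, abs_neg, abs_div, abs_mul, abs_of_pos hsq]
    rw [abs_neg]
    rw [habs] at hej
    have ha : 0 < Real.sqrt (lam j) * |v j| := mul_pos hsq (abs_pos.mpr (hv j))
    have hb : 0 < |lam j - ν| := abs_pos.mpr hne
    rw [le_div_iff₀ ha]
    have h2 := mul_le_mul_of_nonneg_right hej hb.le
    rw [one_mul, mul_assoc, div_mul_cancel₀ _ hb.ne'] at h2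
    linarith
end
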